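/- arXiv:math-ph/0408024 — 5 statements merged into one kernel-verified Lean document; each statement's English description precedes it below -/
import Mathlib

section
/- Fix an integer l₀ > 3. For every N ∈ ℕ and every η-unbalanced large boundary contour Γ in Λ(N), one has Σ_{x ∈ ∂Γ̲} η_x ≤ −2N(1 − 3/l₀); in particular there is a constant c₃ > 0 (depending only on l₀) with Σ_{x ∈ ∂Γ̲} η_x ≤ −c₃ N. -/
/-- Abstract data of a large boundary contour `Γ` in `Λ(N)` (a contour containing an
interface): its length `|Γ|` and the exterior sites `∂⁻Γ̲`, `∂⁺Γ̲` attached to the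
minus/plus components of its boundary.  The fields record the geometric facts valid for
large boundary contours: `|Γ| ≥ 2N + |∂⁺Γ|` and `|∂Γ| ≤ 4N`. -/
structure LargeBoundaryContour (N : ℕ) where
  /-- the number of dual bonds of `Γ` -/
  len : ℕ
  /-- the exterior endpoints of the dual bonds of `∂⁻Γ` -/
  minusB : Finset (ℤ × ℤ)
  /-- the exterior endpoints of the dual bonds of `∂⁺Γ` -/
  plusB : Finset (ℤ × ℤ)
  hdisj : Disjoint minusB plusB
  hlen : 2 * N + plusB.card ≤ len
  hbd : (minusB ∪ plusB).card ≤ 4 * N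

/-- `Γ` is `η`-unbalanced: `Σ_{x ∈ ∂⁻Γ̲} η_x < −(1 − 1/l₀)|Γ|`. -/
def UnbalancedL (l₀ : ℕ) (η : ℤ × ℤ → ℝ) {N : ℕ} (Γ : LargeBoundaryContour N) : Prop :=
  ∑ x ∈ Γ.minusB, η x < -(1 - 1 / (l₀ : ℝ)) * Γ.len

/-- for `l₀ > 3`, every `η`-unbalanced large boundary contour `Γ` in `Λ(N)`
satisfies `Σ_{x ∈ ∂Γ̲} η_x ≤ −2N(1 − 3/l₀)`; in particular there is a constant
`c₃ > 0` depending only on `l₀` with `Σ_{x ∈ ∂Γ̲} η_x ≤ −c₃N`. -/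
theorem statement6 (l₀ : ℕ) (hl₀ : 3 < l₀) :
    (∀ (N : ℕ) (η : ℤ × ℤ → ℝ), (∀ x, η x = 1 ∨ η x = -1) →
      ∀ Γ : LargeBoundaryContour N, UnbalancedL l₀ η Γ →
        ∑ x ∈ Γ.minusB ∪ Γ.plusB, η x ≤ -(2 * (N : ℝ)) * (1 - 3 / (l₀ : ℝ))) ∧
    (∃ c₃ : ℝ, 0 < c₃ ∧
      ∀ (N : ℕ) (η : ℤ × ℤ → ℝ), (∀ x, η x = 1 ∨ η x = -1) →
        ∀ Γ : LargeBoundaryContour N, UnbalancedL l₀ η Γ →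
          ∑ x ∈ Γ.minusB ∪ Γ.plusB, η x ≤ -c₃ * N) := by

  have hl : (3:ℝ) < l₀ := by exact_mod_cast hl₀
  have hl0 : (0:ℝ) < l₀ := by linarith
  have key : ∀ (N : ℕ) (η : ℤ × ℤ → ℝ), (∀ x, η x = 1 ∨ η x = -1) →
      ∀ Γ : LargeBoundaryContour N, UnbalancedL l₀ η Γ →
        ∑ x ∈ Γ.minusB ∪ Γ.plusB, η x ≤ -(2 * (N : ℝ)) * (1 - 3 / (l₀ : ℝ)) := by
    intro N η hη Γ hU
    have hU' : ∑ x ∈ Γ.minusB, η x < -(1 - 1 / (l₀ : ℝ)) * Γ.len := hU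
    have hsplit : ∑ x ∈ Γ.minusB ∪ Γ.plusB, η x
        = ∑ x ∈ Γ.minusB, η x + ∑ x ∈ Γ.plusB, η x := Finset.sum_union Γ.hdisj
    have hSp : ∑ x ∈ Γ.plusB, η x ≤ (Γ.plusB.card : ℝ) := by
      calc ∑ x ∈ Γ.plusB, η x ≤ ∑ _x ∈ Γ.plusB, (1:ℝ) :=
            Finset.sum_le_sum (fun x _ => by rcases hη x with h | h <;> rw [h] <;> norm_num)
        _ = (Γ.plusB.card : ℝ) := by simp
    have hSm : -(Γ.minusB.card : ℝ) ≤ ∑ x ∈ Γ.minusB, η x := by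
      have : ∑ _x ∈ Γ.minusB, (-1:ℝ) ≤ ∑ x ∈ Γ.minusB, η x :=
        Finset.sum_le_sum (fun x _ => by rcases hη x with h | h <;> rw [h] <;> norm_num)
      simpa using this
    have hmcard : (Γ.minusB.card : ℝ) ≤ 4 * N := by
      have h1 : Γ.minusB.card ≤ (Γ.minusB ∪ Γ.plusB).card :=
        Finset.card_le_card Finset.subset_union_left
      have := le_trans h1 Γ.hbd
      exact_mod_cast this
    have hplen : 2 * (N:ℝ) + (Γ.plusB.card : ℝ) ≤ (Γ.len : ℝ) := by exact_mod_cast Γ.hlen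
    -- multiply the unbalanced inequality by l₀
    have h1 : (l₀:ℝ) * ∑ x ∈ Γ.minusB, η x < -((l₀:ℝ) - 1) * Γ.len := by
      have h2 := mul_lt_mul_of_pos_left hU' hl0
      have e : (l₀:ℝ) * (-(1 - 1 / (l₀ : ℝ)) * Γ.len) = -((l₀:ℝ) - 1) * Γ.len := by
        field_simp
      linarith [e ▸ h2]
    have hmul : (l₀:ℝ) * ∑ x ∈ Γ.minusB ∪ Γ.plusB, η x ≤ -(2 * (N:ℝ)) * ((l₀:ℝ) - 3) := by
      rw [hsplit, mul_add]
      nlinarith [mul_le_mul_of_nonneg_left hSp hl0.le,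
        mul_le_mul_of_nonneg_left hSm hl0.le,
        mul_le_mul_of_nonneg_left hmcard hl0.le,
        mul_le_mul_of_nonneg_left hplen hl0.le, h1,
        mul_nonneg (Nat.cast_nonneg N : (0:ℝ) ≤ (N:ℝ)) (by linarith : (0:ℝ) ≤ (l₀:ℝ) - 3)]
    have hdiv : ∑ x ∈ Γ.minusB ∪ Γ.plusB, η x ≤ (-(2 * (N:ℝ)) * ((l₀:ℝ) - 3)) / l₀ := by
      rw [le_div_iff₀ hl0]
      linarith [hmul]
    have e2 : (-(2 * (N:ℝ)) * ((l₀:ℝ) - 3)) / l₀ = -(2 * (N : ℝ)) * (1 - 3 / (l₀ : ℝ)) := by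
      field_simp
    linarith [e2 ▸ hdiv]
  refine ⟨key, ⟨2 * (1 - 3 / (l₀ : ℝ)), by
    have : 3 / (l₀:ℝ) < 1 := by rw [div_lt_one hl0]; linarith
    linarith, fun N η hη Γ hU => ?_⟩⟩
  have := key N η hη Γ hU
  calc ∑ x ∈ Γ.minusB ∪ Γ.plusB, η x ≤ -(2 * (N : ℝ)) * (1 - 3 / (l₀ : ℝ)) := this
    _ = -(2 * (1 - 3 / (l₀ : ℝ))) * N := by ring
end

section
/- Fix an integer l₀ ≥ 2 and let Δ be any finite family of η-unbalanced small boundary contours in Λ(N). Then: (i) there exists a subfamily Δ̃ ⊆ Δ such that ∂Δ̃ = ∂Δ and no point of ∂Λ belongs to the boundaries of three pairwise distinct contours of Δ̃; and (ii) Σ_{x ∈ ∂Δ̲} η_x < −(1 − 4/l₀)|∂Δ|, where ∂Δ = ∪_{Γ∈Δ} ∂Γ and ∂Δ̲ is the set of exterior endpoints of the dual bonds in ∂Δ. -/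
/-- Abstract data of an (η-unbalanced) small boundary contour: its boundary `∂Γ` is a
nonempty interval (a connected subset of the boundary of the box, here modelled by `ℤ`),
`∂⁻Γ̲ ⊆ ∂Γ̲`, and the length satisfies `|Γ| ≥ |∂Γ|`. -/
structure SmallCtr where
  a : ℤ
  b : ℤ
  hab : a ≤ b
  /-- the number of dual bonds of `Γ` -/
  len : ℕ
  /-- the exterior endpoints of the dual bonds of `∂⁻Γ` -/
  minusB : Finset ℤ
  hsub : minusB ⊆ Finset.Icc a b
  hlen : (Finset.Icc a b).card ≤ len

/-- The (exterior sites of the) boundary `∂Γ` of a small boundary contour. -/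
noncomputable def SmallCtr.bnd (Γ : SmallCtr) : Finset ℤ := Finset.Icc Γ.a Γ.b

/-- `Γ` is `η`-unbalanced: `Σ_{x ∈ ∂⁻Γ̲} η_x < −(1 − 1/l₀)|Γ|`. -/
def SmallCtr.Unbalanced (l₀ : ℕ) (η : ℤ → ℝ) (Γ : SmallCtr) : Prop :=
  ∑ x ∈ Γ.minusB, η x < -(1 - 1 / (l₀ : ℝ)) * Γ.len

lemma ctr_bound (l₀ : ℕ) (hl₀ : 2 ≤ l₀) (η : ℤ → ℝ)
    (hη : ∀ x, η x = 1 ∨ η x = -1) (Γ : SmallCtr) (h : Γ.Unbalanced l₀ η) :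
    ∑ x ∈ Γ.bnd, η x < -(1 - 2 / (l₀ : ℝ)) * (Γ.bnd.card : ℝ) := by
  have hl : (2:ℝ) ≤ (l₀:ℝ) := by exact_mod_cast hl₀
  have hl0 : (0:ℝ) < (l₀:ℝ) := by linarith
  have hlow : ∀ s : Finset ℤ, -(s.card:ℝ) ≤ ∑ x ∈ s, η x := by
    intro s
    calc -(s.card:ℝ) = ∑ _x ∈ s, (-1:ℝ) := by simp
      _ ≤ ∑ x ∈ s, η x :=
        Finset.sum_le_sum fun x _ => by rcases hη x with hx | hx <;> rw [hx] <;> norm_num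
  have hupp : ∀ s : Finset ℤ, ∑ x ∈ s, η x ≤ (s.card:ℝ) := by
    intro s
    calc ∑ x ∈ s, η x ≤ ∑ _x ∈ s, (1:ℝ) :=
        Finset.sum_le_sum fun x _ => by rcases hη x with hx | hx <;> rw [hx] <;> norm_num
      _ = (s.card:ℝ) := by simp
  have hM := hlow Γ.minusB
  have hS := hupp (Γ.bnd \ Γ.minusB)
  have hsplit : ∑ x ∈ Γ.bnd \ Γ.minusB, η x + ∑ x ∈ Γ.minusB, η x = ∑ x ∈ Γ.bnd, η x :=
    Finset.sum_sdiff Γ.hsub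
  have hsub' : Γ.minusB ⊆ Γ.bnd := Γ.hsub
  have hcard : ((Γ.bnd \ Γ.minusB).card : ℝ) = (Γ.bnd.card : ℝ) - (Γ.minusB.card : ℝ) := by
    rw [Finset.card_sdiff_of_subset hsub']
    have := Finset.card_le_card hsub'
    push_cast [Nat.cast_sub this]
    ring
  have hBL : (Γ.bnd.card : ℝ) ≤ (Γ.len : ℝ) := by exact_mod_cast Γ.hlen
  have hunb : ∑ x ∈ Γ.minusB, η x < -(1 - 1 / (l₀:ℝ)) * (Γ.len:ℝ) := h
  have ht1 : 1 / (l₀:ℝ) ≤ 1/2 := by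
    rw [div_le_div_iff₀ hl0 (by norm_num)]; linarith
  have ht0 : 0 < 1 / (l₀:ℝ) := by positivity
  -- |minusB| > (1 - 1/l₀) * len
  have hMbig : (1 - 1 / (l₀:ℝ)) * (Γ.len:ℝ) < (Γ.minusB.card : ℝ) := by nlinarith
  have hkey : (0:ℝ) ≤ (1 - 1/(l₀:ℝ)) * ((Γ.len:ℝ) - (Γ.bnd.card:ℝ)) :=
    mul_nonneg (by linarith) (by linarith)
  set t := 1 / (l₀:ℝ) with htdef
  have h2t : 2 / (l₀:ℝ) = 2 * t := by rw [htdef]; ring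
  rw [h2t]
  set L := (Γ.len:ℝ)
  set B := (Γ.bnd.card:ℝ)
  set M := (Γ.minusB.card:ℝ)
  set Sb := ∑ x ∈ Γ.bnd, η x
  set Sm := ∑ x ∈ Γ.minusB, η x
  set Sd := ∑ x ∈ Γ.bnd \ Γ.minusB, η x
  nlinarith [hkey, hcard, hsplit, hunb, hMbig, hS]

lemma exists_redundant (Γ₁ Γ₂ Γ₃ : SmallCtr) (x : ℤ)
    (h1 : x ∈ Γ₁.bnd) (h2 : x ∈ Γ₂.bnd) (h3 : x ∈ Γ₃.bnd) :
    Γ₁.bnd ⊆ Γ₂.bnd ∪ Γ₃.bnd ∨ Γ₂.bnd ⊆ Γ₁.bnd ∪ Γ₃.bnd ∨ Γ₃.bnd ⊆ Γ₁.bnd ∪ Γ₂.bnd := by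
  simp only [SmallCtr.bnd, Finset.mem_Icc] at h1 h2 h3
  have sub : ∀ a b a' b' a'' b'' : ℤ, a' ≤ x → x ≤ b' → a'' ≤ x → x ≤ b'' →
      (a' ≤ a ∧ b ≤ b'' ∨ a'' ≤ a ∧ b ≤ b') →
      Finset.Icc a b ⊆ Finset.Icc a' b' ∪ Finset.Icc a'' b'' := by
    intro a b a' b' a'' b'' ha' hb' ha'' hb'' hcase y hy
    simp only [Finset.mem_Icc, Finset.mem_union] at hy ⊢
    omega
  rcases le_total Γ₁.a Γ₂.a with h12 | h12 <;>
  rcases le_total Γ₁.a Γ₃.a with h13 | h13 <;>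
  rcases le_total Γ₂.a Γ₃.a with h23 | h23 <;>
  rcases le_total Γ₁.b Γ₂.b with g12 | g12 <;>
  rcases le_total Γ₁.b Γ₃.b with g13 | g13 <;>
  rcases le_total Γ₂.b Γ₃.b with g23 | g23 <;>
  first
  | exact Or.inl (sub Γ₁.a Γ₁.b Γ₂.a Γ₂.b Γ₃.a Γ₃.b h2.1 h2.2 h3.1 h3.2 (by omega))
  | exact Or.inr (Or.inl (sub Γ₂.a Γ₂.b Γ₁.a Γ₁.b Γ₃.a Γ₃.b h1.1 h1.2 h3.1 h3.2 (by omega)))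
  | exact Or.inr (Or.inr (sub Γ₃.a Γ₃.b Γ₁.a Γ₁.b Γ₂.a Γ₂.b h1.1 h1.2 h2.1 h2.2 (by omega)))

/-- let `Δ` be a (nonempty) finite family of `η`-unbalanced small boundary
contours.  Then (i) there is a subfamily `Δ̃ ⊆ Δ` with `∂Δ̃ = ∂Δ` such that no boundary
point belongs to the boundaries of three pairwise distinct members of `Δ̃`, and
(ii) `Σ_{x ∈ ∂Δ̲} η_x < −(1 − 4/l₀)|∂Δ|`, where `∂Δ = ∪_{Γ∈Δ} ∂Γ`. -/
theorem statement9 (l₀ : ℕ) (hl₀ : 2 ≤ l₀) (η : ℤ → ℝ)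
    (hη : ∀ x, η x = 1 ∨ η x = -1) (Δ : Finset SmallCtr) (hne : Δ.Nonempty)
    (hunb : ∀ Γ ∈ Δ, Γ.Unbalanced l₀ η) :
    (∃ Δ' ⊆ Δ, Δ'.biUnion SmallCtr.bnd = Δ.biUnion SmallCtr.bnd ∧
      ∀ x : ℤ, ∀ Γ₁ ∈ Δ', ∀ Γ₂ ∈ Δ', ∀ Γ₃ ∈ Δ',
        x ∈ Γ₁.bnd → x ∈ Γ₂.bnd → x ∈ Γ₃.bnd → (Γ₁ = Γ₂ ∨ Γ₁ = Γ₃ ∨ Γ₂ = Γ₃)) ∧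
    (∑ x ∈ Δ.biUnion SmallCtr.bnd, η x
        < -(1 - 4 / (l₀ : ℝ)) * ((Δ.biUnion SmallCtr.bnd).card : ℝ)) := by
  classical
  set U := Δ.biUnion SmallCtr.bnd with hUdef
  obtain ⟨Δ', hΔ'mem, hmin⟩ := Finset.exists_min_image
    ((Δ.powerset).filter fun s => s.biUnion SmallCtr.bnd = U) Finset.card
    ⟨Δ, by simp [hUdef]⟩
  rw [Finset.mem_filter, Finset.mem_powerset] at hΔ'mem
  obtain ⟨hsubΔ, hUeq⟩ := hΔ'mem
  -- erasing a redundant contour contradicts minimality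
  have contra : ∀ Γ Γ' Γ'' : SmallCtr, Γ ∈ Δ' → Γ' ∈ Δ' → Γ'' ∈ Δ' → Γ ≠ Γ' → Γ ≠ Γ'' →
      Γ.bnd ⊆ Γ'.bnd ∪ Γ''.bnd → False := by
    intro Γ Γ' Γ'' hΓ hΓ' hΓ'' hne1 hne2 hsub
    have herase : (Δ'.erase Γ).biUnion SmallCtr.bnd = U := by
      rw [← hUeq]
      apply Finset.Subset.antisymm
      · exact Finset.biUnion_subset_biUnion_of_subset_left _ (Finset.erase_subset _ _)
      · intro y hy
        rw [Finset.mem_biUnion] at hy ⊢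
        obtain ⟨G, hG, hyG⟩ := hy
        by_cases hGΓ : G = Γ
        · subst hGΓ
          rcases Finset.mem_union.mp (hsub hyG) with hmem | hmem
          · exact ⟨Γ', Finset.mem_erase.mpr ⟨hne1.symm, hΓ'⟩, hmem⟩
          · exact ⟨Γ'', Finset.mem_erase.mpr ⟨hne2.symm, hΓ''⟩, hmem⟩
        · exact ⟨G, Finset.mem_erase.mpr ⟨hGΓ, hG⟩, hyG⟩
    have hle : Δ'.card ≤ (Δ'.erase Γ).card :=
      hmin _ (Finset.mem_filter.mpr
        ⟨Finset.mem_powerset.mpr ((Finset.erase_subset _ _).trans hsubΔ), herase⟩)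
    have hlt := Finset.card_erase_lt_of_mem hΓ
    omega
  have h3prop : ∀ x : ℤ, ∀ Γ₁ ∈ Δ', ∀ Γ₂ ∈ Δ', ∀ Γ₃ ∈ Δ',
      x ∈ Γ₁.bnd → x ∈ Γ₂.bnd → x ∈ Γ₃.bnd → (Γ₁ = Γ₂ ∨ Γ₁ = Γ₃ ∨ Γ₂ = Γ₃) := by
    intro x Γ₁ hm1 Γ₂ hm2 Γ₃ hm3 hx1 hx2 hx3
    by_contra hc
    push_neg at hc
    obtain ⟨n12, n13, n23⟩ := hc
    rcases exists_redundant Γ₁ Γ₂ Γ₃ x hx1 hx2 hx3 with hr | hr | hr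
    · exact contra Γ₁ Γ₂ Γ₃ hm1 hm2 hm3 n12 n13 hr
    · exact contra Γ₂ Γ₁ Γ₃ hm2 hm1 hm3 n12.symm n23 hr
    · exact contra Γ₃ Γ₁ Γ₂ hm3 hm1 hm2 n13.symm n23.symm hr
  refine ⟨⟨Δ', hsubΔ, hUeq, h3prop⟩, ?_⟩
  -- part (ii)
  have hl : (2:ℝ) ≤ (l₀:ℝ) := by exact_mod_cast hl₀
  have hl0 : (0:ℝ) < (l₀:ℝ) := by linarith
  set m : ℤ → ℕ := fun x => (Δ'.filter fun Γ => x ∈ Γ.bnd).card with hmdef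
  have hsubU : ∀ Γ ∈ Δ', Γ.bnd ⊆ U := by
    intro Γ hΓ
    rw [← hUeq]
    exact Finset.subset_biUnion_of_mem SmallCtr.bnd hΓ
  have key : ∀ f : ℤ → ℝ,
      ∑ Γ ∈ Δ', ∑ x ∈ Γ.bnd, f x = ∑ x ∈ U, ((m x : ℝ) * f x) := by
    intro f
    have step : ∀ Γ ∈ Δ', ∑ x ∈ Γ.bnd, f x = ∑ x ∈ U, if x ∈ Γ.bnd then f x else 0 := by
      intro Γ hΓ
      rw [← Finset.sum_filter]
      congr 1
      ext y
      simp only [Finset.mem_filter]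
      exact ⟨fun hy => ⟨hsubU Γ hΓ hy, hy⟩, fun hy => hy.2⟩
    rw [Finset.sum_congr rfl step, Finset.sum_comm]
    refine Finset.sum_congr rfl fun x _ => ?_
    rw [← Finset.sum_filter, Finset.sum_const, nsmul_eq_mul]
  have hm2 : ∀ x, m x ≤ 2 := by
    intro x
    by_contra hcon
    push_neg at hcon
    obtain ⟨G₁, G₂, G₃, hG₁, hG₂, hG₃, n12, n13, n23⟩ := Finset.two_lt_card_iff.mp hcon
    rw [Finset.mem_filter] at hG₁ hG₂ hG₃
    rcases h3prop x G₁ hG₁.1 G₂ hG₂.1 G₃ hG₃.1 hG₁.2 hG₂.2 hG₃.2 with h | h | h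
    · exact n12 h
    · exact n13 h
    · exact n23 h
  have hm1 : ∀ x ∈ U, 1 ≤ m x := by
    intro x hx
    rw [← hUeq, Finset.mem_biUnion] at hx
    obtain ⟨G, hG, hxG⟩ := hx
    have : G ∈ Δ'.filter fun Γ => x ∈ Γ.bnd := Finset.mem_filter.mpr ⟨hG, hxG⟩
    exact Finset.card_pos.mpr ⟨G, this⟩
  have hΔ'ne : Δ'.Nonempty := by
    obtain ⟨Γ₀, hΓ₀⟩ := hne
    have hxU : Γ₀.a ∈ U :=
      Finset.mem_biUnion.mpr ⟨Γ₀, hΓ₀, by simp [SmallCtr.bnd, Γ₀.hab]⟩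
    rw [← hUeq, Finset.mem_biUnion] at hxU
    obtain ⟨G, hG, -⟩ := hxU
    exact ⟨G, hG⟩
  -- per-contour bounds, summed
  have hA : ∑ Γ ∈ Δ', ∑ x ∈ Γ.bnd, η x
      < ∑ Γ ∈ Δ', -(1 - 2 / (l₀:ℝ)) * (Γ.bnd.card : ℝ) :=
    Finset.sum_lt_sum_of_nonempty hΔ'ne fun Γ hΓ =>
      ctr_bound l₀ hl₀ η hη Γ (hunb Γ (hsubΔ hΓ))
  have hScard : ∑ Γ ∈ Δ', (Γ.bnd.card : ℝ) = ∑ x ∈ U, (m x : ℝ) := by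
    have := key (fun _ => (1:ℝ))
    simpa using this
  have hAU : ∑ Γ ∈ Δ', ∑ x ∈ Γ.bnd, η x = ∑ x ∈ U, (m x : ℝ) * η x := key η
  have hT : ∑ x ∈ U, (m x : ℝ) * η x
      < -(1 - 2 / (l₀:ℝ)) * ∑ x ∈ U, (m x : ℝ) := by
    have h1 := hA
    rw [hAU, ← Finset.mul_sum, hScard] at h1
    exact h1
  have hpt : ∀ x ∈ U, η x ≤ (m x : ℝ) * η x + ((m x : ℝ) - 1) := by
    intro x hx
    have h1m : (1:ℝ) ≤ (m x : ℝ) := by exact_mod_cast hm1 x hx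
    rcases hη x with hx' | hx' <;> rw [hx'] <;> nlinarith
  have hsum1 : ∑ x ∈ U, η x
      ≤ ∑ x ∈ U, (m x : ℝ) * η x + ((∑ x ∈ U, (m x : ℝ)) - (U.card : ℝ)) := by
    have h2 := Finset.sum_le_sum hpt
    rw [Finset.sum_add_distrib, Finset.sum_sub_distrib, Finset.sum_const,
      nsmul_eq_mul, mul_one] at h2
    linarith [h2]
  have hS2 : ∑ x ∈ U, (m x : ℝ) ≤ 2 * (U.card : ℝ) := by
    calc ∑ x ∈ U, (m x : ℝ) ≤ ∑ _x ∈ U, (2:ℝ) :=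
        Finset.sum_le_sum fun x _ => by exact_mod_cast hm2 x
      _ = 2 * (U.card : ℝ) := by rw [Finset.sum_const, nsmul_eq_mul]; ring
  have hc0 : (0:ℝ) ≤ 2 / (l₀:ℝ) := by positivity
  have hfin : ∑ x ∈ U, η x < -(1 - 4 / (l₀:ℝ)) * (U.card : ℝ) := by
    have hkey2 : (0:ℝ) ≤ 2 / (l₀:ℝ) * (2 * (U.card : ℝ) - ∑ x ∈ U, (m x : ℝ)) :=
      mul_nonneg hc0 (by linarith)
    set inv := 2 / (l₀:ℝ) with hinvdef
    have h4 : 4 / (l₀:ℝ) = 2 * inv := by rw [hinvdef]; ring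
    rw [h4]
    set S := ∑ x ∈ U, (m x : ℝ)
    set B := (U.card : ℝ)
    set Smη := ∑ x ∈ U, (m x : ℝ) * η x
    set Sb := ∑ x ∈ U, η x
    nlinarith [hkey2, hT, hsum1, hS2]
  exact hfin
end

section
/- For every finite family F of nonempty finite intervals of ℤ (i.e., connected subsets with respect to nearest-neighbor adjacency), there exists a subfamily G ⊆ F such that the union of the members of G equals the union of the members of F, and no integer belongs to three pairwise distinct members of G. -/
lemma three_int (a₁ b₁ a₂ b₂ a₃ b₃ x : ℤ)
    (h₁ : a₁ ≤ x ∧ x ≤ b₁) (h₂ : a₂ ≤ x ∧ x ≤ b₂) (h₃ : a₃ ≤ x ∧ x ≤ b₃) :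
    (∀ y : ℤ, a₁ ≤ y → y ≤ b₁ → (a₂ ≤ y ∧ y ≤ b₂) ∨ (a₃ ≤ y ∧ y ≤ b₃)) ∨
    (∀ y : ℤ, a₂ ≤ y → y ≤ b₂ → (a₁ ≤ y ∧ y ≤ b₁) ∨ (a₃ ≤ y ∧ y ≤ b₃)) ∨
    (∀ y : ℤ, a₃ ≤ y → y ≤ b₃ → (a₁ ≤ y ∧ y ≤ b₁) ∨ (a₂ ≤ y ∧ y ≤ b₂)) := by
  rcases le_total a₁ a₂ with u12 | u12 <;> rcases le_total a₁ a₃ with u13 | u13 <;>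
    rcases le_total a₂ a₃ with u23 | u23 <;>
    rcases le_total b₁ b₂ with v12 | v12 <;> rcases le_total b₁ b₃ with v13 | v13 <;>
    rcases le_total b₂ b₃ with v23 | v23 <;>
    first
      | (left; intro y hy1 hy2; omega)
      | (right; left; intro y hy1 hy2; omega)
      | (right; right; intro y hy1 hy2; omega)

/-- For every finite family `F` of nonempty finite intervals of `ℤ`,
there is a subfamily `G ⊆ F` whose union equals the union of `F` and such that no
integer lies in three pairwise distinct members of `G`. -/
theorem statement10 (F : Finset (Finset ℤ))
    (hF : ∀ I ∈ F, ∃ a b : ℤ, a ≤ b ∧ I = Finset.Icc a b) :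
    ∃ G ⊆ F,
      (∀ x : ℤ, (∃ I ∈ G, x ∈ I) ↔ (∃ I ∈ F, x ∈ I)) ∧
      (∀ x : ℤ, ∀ I₁ ∈ G, ∀ I₂ ∈ G, ∀ I₃ ∈ G,
        x ∈ I₁ → x ∈ I₂ → x ∈ I₃ → (I₁ = I₂ ∨ I₁ = I₃ ∨ I₂ = I₃)) := by
  induction F using Finset.strongInduction with
  | _ F ih =>
    by_cases h : ∃ x : ℤ, ∃ I₁ ∈ F, ∃ I₂ ∈ F, ∃ I₃ ∈ F,
        x ∈ I₁ ∧ x ∈ I₂ ∧ x ∈ I₃ ∧ I₁ ≠ I₂ ∧ I₁ ≠ I₃ ∧ I₂ ≠ I₃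
    · obtain ⟨x, I₁, hI₁, I₂, hI₂, I₃, hI₃, m₁, m₂, m₃, d₁₂, d₁₃, d₂₃⟩ := h
      -- key step: if I ∈ F is covered by two other members J, K of F, erase it.
      have key : ∀ I J K : Finset ℤ, I ∈ F → J ∈ F → K ∈ F → I ≠ J → I ≠ K →
          (∀ y ∈ I, y ∈ J ∨ y ∈ K) →
          ∃ G ⊆ F,
            (∀ x : ℤ, (∃ I ∈ G, x ∈ I) ↔ (∃ I ∈ F, x ∈ I)) ∧
            (∀ x : ℤ, ∀ I₁ ∈ G, ∀ I₂ ∈ G, ∀ I₃ ∈ G,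
              x ∈ I₁ → x ∈ I₂ → x ∈ I₃ → (I₁ = I₂ ∨ I₁ = I₃ ∨ I₂ = I₃)) := by
        intro I J K hI hJ hK hIJ hIK hsub
        have hss : F.erase I ⊂ F := Finset.erase_ssubset hI
        obtain ⟨G, hG, hun, htr⟩ := ih (F.erase I) hss
          (fun I' hI' => hF I' (Finset.mem_of_mem_erase hI'))
        refine ⟨G, hG.trans (Finset.erase_subset I F), fun y => ?_, htr⟩
        rw [hun y]
        constructor
        · rintro ⟨I', hI', hy⟩
          exact ⟨I', Finset.mem_of_mem_erase hI', hy⟩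
        · rintro ⟨I', hI', hy⟩
          by_cases hII : I' = I
          · subst hII
            rcases hsub y hy with hyJ | hyK
            · exact ⟨J, Finset.mem_erase_of_ne_of_mem (Ne.symm hIJ) hJ, hyJ⟩
            · exact ⟨K, Finset.mem_erase_of_ne_of_mem (Ne.symm hIK) hK, hyK⟩
          · exact ⟨I', Finset.mem_erase_of_ne_of_mem hII hI', hy⟩
      obtain ⟨a₁, b₁, -, e₁⟩ := hF I₁ hI₁
      obtain ⟨a₂, b₂, -, e₂⟩ := hF I₂ hI₂
      obtain ⟨a₃, b₃, -, e₃⟩ := hF I₃ hI₃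
      subst e₁ e₂ e₃
      rw [Finset.mem_Icc] at m₁ m₂ m₃
      rcases three_int a₁ b₁ a₂ b₂ a₃ b₃ x m₁ m₂ m₃ with hc | hc | hc
      · exact key _ _ _ hI₁ hI₂ hI₃ d₁₂ d₁₃ (by
          intro y hy; rw [Finset.mem_Icc] at hy
          simpa [Finset.mem_Icc] using hc y hy.1 hy.2)
      · exact key _ _ _ hI₂ hI₁ hI₃ (Ne.symm d₁₂) d₂₃ (by
          intro y hy; rw [Finset.mem_Icc] at hy
          simpa [Finset.mem_Icc] using hc y hy.1 hy.2)
      · exact key _ _ _ hI₃ hI₁ hI₂ (Ne.symm d₁₃) (Ne.symm d₂₃) (by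
          intro y hy; rw [Finset.mem_Icc] at hy
          simpa [Finset.mem_Icc] using hc y hy.1 hy.2)
    · push_neg at h
      refine ⟨F, le_refl F, fun x => Iff.rfl, ?_⟩
      intro x I₁ hI₁ I₂ hI₂ I₃ hI₃ m₁ m₂ m₃
      by_contra hc
      push_neg at hc
      exact hc.2.2 (h x I₁ hI₁ I₂ hI₂ I₃ hI₃ m₁ m₂ m₃ hc.1 hc.2.1)
end

section
/- There are constants β₄ > 0 and c₂ > 0, independent of l₀, such that for every β ≥ l₀β₄, every boundary condition η and every volume Λ = Λ(N): sup_{x*} Σ_{C ∈ 𝔠₀^η, x* ∈ C} |φ₀^η(C)| · exp[(2β/l₀ − c₂)|C|] ≤ 1, where the supremum is over dual sites x* and the sum is over all clusters C of the balanced-contour polymer model containing x*. Moreover, φ₀^η(C) depends only on the restriction of η to the domain dom(C). -/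
open scoped Classical

/-- Abstract data of a contour `Γ` of `Λ`: the set of dual sites it occupies, its length
`|Γ|` (number of dual bonds), and the exterior endpoints `∂⁻Γ̲` of the dual bonds of the
minus-component of its boundary. -/
structure Ctr where
  /-- the dual sites lying on `Γ` -/
  sites : Finset (ℤ × ℤ)
  /-- the number of dual bonds of `Γ` -/
  len : ℕ
  /-- the exterior endpoints of the dual bonds of `∂⁻Γ` -/
  minusB : Finset (ℤ × ℤ)
  deriving DecidableEq

/-- `Γ` is `η`-balanced: `Σ_{x ∈ ∂⁻Γ̲} η_x ≥ −(1 − 1/l₀)|Γ|`. -/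
def CtrBalanced (l₀ : ℕ) (η : ℤ × ℤ → ℝ) (Γ : Ctr) : Prop :=
  -(1 - 1 / (l₀ : ℝ)) * Γ.len ≤ ∑ x ∈ Γ.minusB, η x

/-- The contour weight `ρ^η(Γ) = exp[−2β(|Γ| + Σ_{x ∈ ∂⁻Γ̲} η_x)]`. -/
noncomputable def rho (β : ℝ) (η : ℤ × ℤ → ℝ) (Γ : Ctr) : ℝ :=
  Real.exp (-2 * β * ((Γ.len : ℝ) + ∑ x ∈ Γ.minusB, η x))

/-- A finite family of contours is pairwise compatible. -/
def PairwiseCompat (compat : Ctr → Ctr → Prop) (Δ : Finset Ctr) : Prop :=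
  ∀ Γ ∈ Δ, ∀ Γ' ∈ Δ, Γ ≠ Γ' → compat Γ Γ'

/-- The partition function `Z(A) = Σ_{Δ ⊆ A compatible} Π_{Γ∈Δ} ρ^η(Γ)` of the polymer
model on `A`. -/
noncomputable def polyZ (β : ℝ) (η : ℤ × ℤ → ℝ) (compat : Ctr → Ctr → Prop)
    (A : Finset Ctr) : ℝ :=
  ∑ Δ ∈ A.powerset.filter (PairwiseCompat compat), ∏ Γ ∈ Δ, rho β η Γ

/-- The standard cluster weight `φ^η(C) = Σ_{A ⊆ C} (−1)^{|C∖A|} log Z(A)` of the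
cluster expansion. -/
noncomputable def phi (β : ℝ) (η : ℤ × ℤ → ℝ) (compat : Ctr → Ctr → Prop)
    (C : Finset Ctr) : ℝ :=
  ∑ A ∈ C.powerset, (-1 : ℝ) ^ (C.card - A.card) * Real.log (polyZ β η compat A)

/-- A nonempty finite family of contours is a cluster if it admits no decomposition into
two nonempty disjoint mutually compatible parts. -/
def IsClusterC (compat : Ctr → Ctr → Prop) (C : Finset Ctr) : Prop :=
  C.Nonempty ∧
    ¬ ∃ C₁ C₂ : Finset Ctr, C₁.Nonempty ∧ C₂.Nonempty ∧ Disjoint C₁ C₂ ∧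
      (∀ Γ, Γ ∈ C ↔ (Γ ∈ C₁ ∨ Γ ∈ C₂)) ∧
      ∀ Γ ∈ C₁, ∀ Γ' ∈ C₂, compat Γ Γ'

/-- The length `|C| = Σ_{Γ∈C} |Γ|` of a cluster. -/
noncomputable def tlen (C : Finset Ctr) : ℝ := ∑ Γ ∈ C, (Γ.len : ℝ)
section Aux

variable (compat : Ctr → Ctr → Prop)

/-- Complex partition function with polymer activities `t`. -/
noncomputable def Zc (t : Ctr → ℂ) (A : Finset Ctr) : ℂ :=
  ∑ Δ ∈ A.powerset.filter (PairwiseCompat compat), ∏ Γ ∈ Δ, t Γ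

lemma Zc_empty (t : Ctr → ℂ) : Zc compat t ∅ = 1 := by
  have hpc : PairwiseCompat compat ∅ := fun Γ hΓ => absurd hΓ (Finset.notMem_empty _)
  rw [Zc, Finset.powerset_empty, Finset.filter_singleton, if_pos hpc]
  simp

lemma Zc_congr {t t' : Ctr → ℂ} {A : Finset Ctr} (h : ∀ Γ ∈ A, t Γ = t' Γ) :
    Zc compat t A = Zc compat t' A := by
  refine Finset.sum_congr rfl fun Δ hΔ => Finset.prod_congr rfl fun Γ hΓ => ?_
  rw [Finset.mem_filter, Finset.mem_powerset] at hΔ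
  exact h Γ (hΔ.1 hΓ)

lemma Zc_subset {t : Ctr → ℂ} {A B : Finset Ctr} (hB : B ⊆ A)
    (h0 : ∀ Γ ∈ A, Γ ∉ B → t Γ = 0) : Zc compat t A = Zc compat t B := by
  refine (Finset.sum_subset ?_ ?_).symm
  · intro Δ hΔ
    rw [Finset.mem_filter, Finset.mem_powerset] at hΔ ⊢
    exact ⟨hΔ.1.trans hB, hΔ.2⟩
  · intro Δ hΔ hΔ'
    rw [Finset.mem_filter, Finset.mem_powerset] at hΔ hΔ'
    have : ¬ Δ ⊆ B := fun hsub => hΔ' ⟨hsub, hΔ.2⟩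
    obtain ⟨γ, hγΔ, hγB⟩ := Finset.not_subset.mp this
    exact Finset.prod_eq_zero hγΔ (h0 γ (hΔ.1 hγΔ) hγB)

lemma Zc_real (β : ℝ) (η : ℤ × ℤ → ℝ) (A : Finset Ctr) :
    Zc compat (fun Γ => (rho β η Γ : ℂ)) A = (polyZ β η compat A : ℂ) := by
  rw [polyZ, Complex.ofReal_sum]
  exact Finset.sum_congr rfl fun Δ _ => (Complex.ofReal_prod _ _).symm

lemma polyZ_one_le (β : ℝ) (η : ℤ × ℤ → ℝ) (A : Finset Ctr) :
    1 ≤ polyZ β η compat A := by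
  have hem : (∅ : Finset Ctr) ∈ A.powerset.filter (PairwiseCompat compat) := by
    simp [PairwiseCompat]
  calc (1:ℝ) = ∏ Γ ∈ (∅ : Finset Ctr), rho β η Γ := by simp
  _ ≤ _ := Finset.single_le_sum (f := fun Δ => ∏ Γ ∈ Δ, rho β η Γ)
      (fun Δ _ => Finset.prod_nonneg fun Γ _ => (Real.exp_pos _).le) hem

lemma polyZ_pos (β : ℝ) (η : ℤ × ℤ → ℝ) (A : Finset Ctr) : 0 < polyZ β η compat A :=
  lt_of_lt_of_le one_pos (polyZ_one_le compat β η A)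

/-- Deletion recursion for `Zc`. -/
lemma Zc_rec {t : Ctr → ℂ} {A : Finset Ctr} {Γ : Ctr}
    (hΓ : Γ ∈ A) :
    Zc compat t A = Zc compat t (A.erase Γ) +
      t Γ * Zc compat t ((A.erase Γ).filter (fun Γ' => compat Γ' Γ ∧ compat Γ Γ')) := by
  classical
  set G := (A.erase Γ).filter (fun Γ' => compat Γ' Γ ∧ compat Γ Γ') with hGdef
  rw [Zc, ← Finset.sum_filter_add_sum_filter_not
    (A.powerset.filter (PairwiseCompat compat)) (fun Δ => Γ ∈ Δ)]
  have h1 : ((A.powerset.filter (PairwiseCompat compat)).filter (fun Δ => Γ ∉ Δ))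
      = (A.erase Γ).powerset.filter (PairwiseCompat compat) := by
    ext Δ
    simp only [Finset.mem_filter, Finset.mem_powerset, Finset.subset_erase]
    tauto
  have h2 : ∑ Δ ∈ (A.powerset.filter (PairwiseCompat compat)).filter (fun Δ => Γ ∈ Δ),
      ∏ γ ∈ Δ, t γ = t Γ * Zc compat t G := by
    rw [Zc, Finset.mul_sum]
    refine Finset.sum_bij' (fun Δ _ => Δ.erase Γ) (fun Δ' _ => insert Γ Δ') ?_ ?_ ?_ ?_ ?_
    · intro Δ hΔ
      simp only [Finset.mem_filter, Finset.mem_powerset] at hΔ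
      obtain ⟨⟨hΔA, hPC⟩, hΓΔ⟩ := hΔ
      simp only [Finset.mem_filter, Finset.mem_powerset]
      constructor
      · intro γ hγ
        rw [Finset.mem_erase] at hγ
        rw [hGdef]
        simp only [Finset.mem_filter, Finset.mem_erase]
        exact ⟨⟨hγ.1, hΔA hγ.2⟩, hPC γ hγ.2 Γ hΓΔ hγ.1, hPC Γ hΓΔ γ hγ.2 (Ne.symm hγ.1)⟩
      · intro γ hγ γ' hγ' hne
        exact hPC γ (Finset.mem_of_mem_erase hγ) γ' (Finset.mem_of_mem_erase hγ') hne
    · intro Δ' hΔ'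
      simp only [Finset.mem_filter, Finset.mem_powerset] at hΔ'
      obtain ⟨hΔ'G, hPC⟩ := hΔ'
      have hΓΔ' : Γ ∉ Δ' := by
        intro hmem
        have := hΔ'G hmem
        rw [hGdef, Finset.mem_filter, Finset.mem_erase] at this
        exact this.1.1 rfl
      simp only [Finset.mem_filter, Finset.mem_powerset]
      refine ⟨⟨?_, ?_⟩, Finset.mem_insert_self _ _⟩
      · intro γ hγ
        rcases Finset.mem_insert.mp hγ with rfl | hγ'
        · exact hΓ
        · exact Finset.mem_of_mem_erase (Finset.mem_filter.mp (hΔ'G hγ')).1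
      · intro γ hγ γ' hγ' hne
        rcases Finset.mem_insert.mp hγ with rfl | hγ1 <;>
          rcases Finset.mem_insert.mp hγ' with rfl | hγ2
        · exact absurd rfl hne
        · exact ((Finset.mem_filter.mp (hΔ'G hγ2)).2).2
        · exact ((Finset.mem_filter.mp (hΔ'G hγ1)).2).1
        · exact hPC γ hγ1 γ' hγ2 hne
    · intro Δ hΔ
      simp only [Finset.mem_filter] at hΔ
      exact Finset.insert_erase hΔ.2
    · intro Δ' hΔ'
      simp only [Finset.mem_filter, Finset.mem_powerset] at hΔ'
      have hΓΔ' : Γ ∉ Δ' := by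
        intro hmem
        have := hΔ'.1 hmem
        rw [hGdef, Finset.mem_filter, Finset.mem_erase] at this
        exact this.1.1 rfl
      exact Finset.erase_insert hΓΔ'
    · intro Δ hΔ
      simp only [Finset.mem_filter] at hΔ
      exact (Finset.mul_prod_erase Δ t hΔ.2).symm
  rw [h1, h2]
  rw [add_comm]
  rfl

end Aux
lemma exp_neg_two_le {r : ℝ} (h0 : 0 ≤ r) (h2 : r ≤ 1/2) :
    Real.exp (-(2*r)) ≤ 1 - r := by
  have h3 : (1:ℝ) + 2*r ≤ Real.exp (2*r) := by
    have := Real.add_one_le_exp (2*r); linarith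
  have h4 : (0:ℝ) < Real.exp (-(2*r)) := Real.exp_pos _
  have h6 : Real.exp (-(2*r)) * Real.exp (2*r) = 1 := by
    rw [← Real.exp_add]; ring_nf; exact Real.exp_zero
  nlinarith [mul_le_mul_of_nonneg_left h3 h4.le, mul_nonneg h0 (by linarith : (0:ℝ) ≤ 1 - 2*r)]

lemma norm_log_near_one {z : ℂ} (h : ‖z - 1‖ ≤ 1/2) : ‖Complex.log z‖ ≤ 2 * ‖z - 1‖ := by
  have h1 : z = 1 + (z - 1) := by ring
  calc ‖Complex.log z‖ = ‖Complex.log (1 + (z-1))‖ := by rw [← h1]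
  _ ≤ (3/2) * ‖z - 1‖ := Complex.norm_log_one_add_half_le_self h
  _ ≤ 2 * ‖z - 1‖ := by nlinarith [norm_nonneg (z-1)]

lemma re_pos_of_near_one {z : ℂ} (h : ‖z - 1‖ ≤ 1/2) : z ∈ Complex.slitPlane := by
  rw [Complex.mem_slitPlane_iff]
  left
  have h2 : |(z-1).re| ≤ ‖z - 1‖ := Complex.abs_re_le_norm _
  have h3 : (z-1).re = z.re - 1 := by simp
  rw [h3] at h2
  have := abs_le.mp h2
  linarith [this.1]

/-- Schwarz-type bound for the increment of a bounded holomorphic function on a disc. -/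
lemma schwarz_diff {f : ℂ → ℂ} {R M : ℝ} (hR : 0 < R) (hM : 0 ≤ M)
    (hd : DifferentiableOn ℂ f (Metric.ball 0 R))
    (hb : ∀ z ∈ Metric.ball (0:ℂ) R, ‖f z‖ ≤ M)
    {x : ℂ} (hx : x ∈ Metric.ball (0:ℂ) R) :
    ‖f x - f 0‖ ≤ 3 * M / R * ‖x‖ := by
  have h0 : (0:ℂ) ∈ Metric.ball (0:ℂ) R := by simpa [Metric.mem_ball] using hR
  have key : ∀ ε > 0, ‖f x - f 0‖ ≤ (2*M + ε) / R * ‖x‖ := by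
    intro ε hε
    have hmaps : Set.MapsTo f (Metric.ball 0 R) (Metric.ball (f 0) (2*M + ε)) := by
      intro z hz
      rw [Metric.mem_ball, dist_eq_norm]
      calc ‖f z - f 0‖ ≤ ‖f z‖ + ‖f 0‖ := norm_sub_le _ _
      _ ≤ M + M := add_le_add (hb z hz) (hb 0 h0)
      _ < 2*M + ε := by linarith
    have := Complex.dist_le_div_mul_dist_of_mapsTo_ball hd (hmaps.mono_right Metric.ball_subset_closedBall) hx
    rwa [dist_eq_norm, dist_eq_norm, sub_zero] at this
  have key2 : ‖f x - f 0‖ ≤ 2 * M / R * ‖x‖ := by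
    by_cases hx0 : ‖x‖ = 0
    · have := key 1 one_pos
      rw [hx0] at this ⊢
      simpa using this
    have hx0' : 0 < ‖x‖ := lt_of_le_of_ne (norm_nonneg _) (Ne.symm hx0)
    refine le_of_forall_pos_le_add fun δ hδ => ?_
    have hε : 0 < δ * R / ‖x‖ := by positivity
    calc ‖f x - f 0‖ ≤ (2*M + δ * R / ‖x‖) / R * ‖x‖ := key _ hε
    _ = 2 * M / R * ‖x‖ + δ := by
        rw [div_mul_eq_mul_div, div_mul_eq_mul_div, add_mul, _root_.add_div]
        congr 1
        rw [div_mul_cancel₀ _ hx0, mul_comm δ R, mul_comm R δ, mul_div_assoc,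
          div_self hR.ne', mul_one]
  calc ‖f x - f 0‖ ≤ 2 * M / R * ‖x‖ := key2
  _ ≤ 3 * M / R * ‖x‖ := by gcongr; linarith
section Dob

variable {compat : Ctr → Ctr → Prop}

lemma dob (hsym : ∀ Γ Γ', compat Γ Γ' → compat Γ' Γ)
    (P : Finset Ctr) (u : Ctr → ℝ)
    (hu : ∀ Γ ∈ P, 0 < u Γ)
    (hr : ∀ Γ ∈ P, u Γ * Real.exp Γ.len ≤ 1/2)
    (hnb : ∀ Γ ∈ P, ∑ Γ' ∈ P.filter (fun Γ' => ¬ compat Γ' Γ), u Γ' * Real.exp Γ'.len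
      ≤ (Γ.len : ℝ)/2)
    (t : Ctr → ℂ) (ht : ∀ Γ ∈ P, ‖t Γ‖ ≤ u Γ) :
    ∀ A ⊆ P, ∀ Γ ∈ A, ‖Zc compat t A - Zc compat t (A.erase Γ)‖
      ≤ ‖t Γ‖ * Real.exp Γ.len * ‖Zc compat t (A.erase Γ)‖ := by
  suffices H : ∀ m : ℕ, ∀ A ⊆ P, A.card ≤ m → ∀ Γ ∈ A,
      ‖Zc compat t A - Zc compat t (A.erase Γ)‖
        ≤ ‖t Γ‖ * Real.exp Γ.len * ‖Zc compat t (A.erase Γ)‖ by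
    intro A hA Γ hΓ; exact H A.card A hA le_rfl Γ hΓ
  intro m
  induction m with
  | zero =>
    intro A hA hc Γ hΓ
    rw [Nat.le_zero, Finset.card_eq_zero] at hc
    subst hc; exact absurd hΓ (Finset.notMem_empty _)
  | succ m ih =>
    intro A hA hc Γ hΓA
    have hΓP := hA hΓA
    set G := (A.erase Γ).filter (fun Γ' => compat Γ' Γ ∧ compat Γ Γ') with hGdef
    have chain : ∀ k : ℕ, ∀ B : Finset Ctr, G ⊆ B → B ⊆ A.erase Γ → (B \ G).card ≤ k →
        ‖Zc compat t G‖
          ≤ Real.exp (2 * ∑ Γ' ∈ B \ G, u Γ' * Real.exp Γ'.len) * ‖Zc compat t B‖ := by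
      intro k
      induction k with
      | zero =>
        intro B hGB hBA hcard
        rw [Nat.le_zero, Finset.card_eq_zero, Finset.sdiff_eq_empty_iff_subset] at hcard
        have hBG : B = G := Finset.Subset.antisymm hcard hGB
        rw [hBG, Finset.sdiff_self]
        simp
      | succ k ihk =>
        intro B hGB hBA hcard
        by_cases hBG : B ⊆ G
        · have hBG' : B = G := Finset.Subset.antisymm hBG hGB
          rw [hBG', Finset.sdiff_self]
          simp
        · obtain ⟨Γ', hΓ'B, hΓ'G⟩ := Finset.not_subset.mp hBG
          have hBP : B ⊆ P := (hBA.trans (Finset.erase_subset _ _)).trans hA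
          have hΓ'P : Γ' ∈ P := hBP hΓ'B
          have hBcard : B.card ≤ m := by
            have h1 : B.card ≤ (A.erase Γ).card := Finset.card_le_card hBA
            have h2 : (A.erase Γ).card = A.card - 1 := Finset.card_erase_of_mem hΓA
            have h3 : 1 ≤ A.card := Finset.card_pos.mpr ⟨Γ, hΓA⟩
            omega
          have hmain := ih B hBP hBcard Γ' hΓ'B
          have hrr : ‖t Γ'‖ * Real.exp Γ'.len ≤ u Γ' * Real.exp Γ'.len :=
            mul_le_mul_of_nonneg_right (ht Γ' hΓ'P) (Real.exp_pos _).le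
          have hr'1 : u Γ' * Real.exp Γ'.len ≤ 1/2 := hr Γ' hΓ'P
          have hr'0 : 0 ≤ u Γ' * Real.exp Γ'.len :=
            mul_nonneg (hu Γ' hΓ'P).le (Real.exp_pos _).le
          have hstep : ‖Zc compat t (B.erase Γ')‖
              ≤ Real.exp (2*(u Γ' * Real.exp Γ'.len)) * ‖Zc compat t B‖ := by
            have h4 : ‖Zc compat t (B.erase Γ')‖
                ≤ ‖Zc compat t B‖ + (u Γ' * Real.exp Γ'.len) * ‖Zc compat t (B.erase Γ')‖ := by
              have h4a : ‖Zc compat t (B.erase Γ')‖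
                  ≤ ‖Zc compat t B‖ + ‖Zc compat t B - Zc compat t (B.erase Γ')‖ := by
                have := norm_sub_le (Zc compat t B)
                  (Zc compat t B - Zc compat t (B.erase Γ'))
                simpa using this
              have h4b : ‖Zc compat t B - Zc compat t (B.erase Γ')‖
                  ≤ (u Γ' * Real.exp Γ'.len) * ‖Zc compat t (B.erase Γ')‖ :=
                hmain.trans (mul_le_mul_of_nonneg_right hrr (norm_nonneg _))
              linarith
            have h5 : (1 - u Γ' * Real.exp Γ'.len) * ‖Zc compat t (B.erase Γ')‖
                ≤ ‖Zc compat t B‖ := by nlinarith [norm_nonneg (Zc compat t (B.erase Γ'))]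
            have h6 := exp_neg_two_le hr'0 hr'1
            have h7 : Real.exp (-(2*(u Γ' * Real.exp Γ'.len))) * ‖Zc compat t (B.erase Γ')‖
                ≤ ‖Zc compat t B‖ :=
              le_trans (mul_le_mul_of_nonneg_right h6 (norm_nonneg _)) h5
            have h8 : Real.exp (2*(u Γ' * Real.exp Γ'.len))
                * Real.exp (-(2*(u Γ' * Real.exp Γ'.len))) = 1 := by
              rw [← Real.exp_add]; ring_nf; exact Real.exp_zero
            calc ‖Zc compat t (B.erase Γ')‖
                = Real.exp (2*(u Γ' * Real.exp Γ'.len))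
                  * (Real.exp (-(2*(u Γ' * Real.exp Γ'.len))) * ‖Zc compat t (B.erase Γ')‖) := by
                  rw [← mul_assoc, h8, one_mul]
            _ ≤ Real.exp (2*(u Γ' * Real.exp Γ'.len)) * ‖Zc compat t B‖ :=
                  mul_le_mul_of_nonneg_left h7 (Real.exp_pos _).le
          have hGBe : G ⊆ B.erase Γ' := by
            intro g hg; rw [Finset.mem_erase]
            exact ⟨fun h => hΓ'G (h ▸ hg), hGB hg⟩
          have hBeA : B.erase Γ' ⊆ A.erase Γ := (Finset.erase_subset _ _).trans hBA
          have h9 : (B.erase Γ') \ G = (B \ G).erase Γ' := by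
            ext x
            simp only [Finset.mem_erase, Finset.mem_sdiff]
            tauto
          have h8' : Γ' ∈ B \ G := Finset.mem_sdiff.mpr ⟨hΓ'B, hΓ'G⟩
          have hcard' : ((B.erase Γ') \ G).card ≤ k := by
            rw [h9, Finset.card_erase_of_mem h8']
            omega
          have hrec := ihk (B.erase Γ') hGBe hBeA hcard'
          have hsum : ∑ x ∈ B \ G, u x * Real.exp x.len
              = (∑ x ∈ (B.erase Γ') \ G, u x * Real.exp x.len)
                + u Γ' * Real.exp Γ'.len := by
            rw [h9]
            exact (Finset.sum_erase_add (B \ G) _ h8').symm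
          calc ‖Zc compat t G‖
              ≤ Real.exp (2 * ∑ x ∈ (B.erase Γ') \ G, u x * Real.exp x.len)
                * ‖Zc compat t (B.erase Γ')‖ := hrec
          _ ≤ Real.exp (2 * ∑ x ∈ (B.erase Γ') \ G, u x * Real.exp x.len)
                * (Real.exp (2*(u Γ' * Real.exp Γ'.len)) * ‖Zc compat t B‖) :=
                mul_le_mul_of_nonneg_left hstep (Real.exp_pos _).le
          _ = Real.exp (2 * ∑ x ∈ B \ G, u x * Real.exp x.len) * ‖Zc compat t B‖ := by
                rw [hsum, mul_add, ← mul_assoc, ← Real.exp_add]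
    have hGsub : G ⊆ A.erase Γ := Finset.filter_subset _ _
    have hchain := chain ((A.erase Γ) \ G).card (A.erase Γ) hGsub (Finset.Subset.refl _) le_rfl
    have hsub2 : (A.erase Γ) \ G ⊆ P.filter (fun Γ' => ¬ compat Γ' Γ) := by
      intro x hx
      rw [Finset.mem_sdiff] at hx
      rw [Finset.mem_filter]
      refine ⟨hA (Finset.mem_of_mem_erase hx.1), ?_⟩
      intro hcpt
      apply hx.2
      rw [hGdef, Finset.mem_filter]
      exact ⟨hx.1, hcpt, hsym _ _ hcpt⟩
    have hsum2 : ∑ x ∈ (A.erase Γ) \ G, u x * Real.exp x.len ≤ (Γ.len : ℝ)/2 := by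
      refine le_trans (Finset.sum_le_sum_of_subset_of_nonneg hsub2 ?_) (hnb Γ hΓP)
      intro x hx _
      exact mul_nonneg (hu x (Finset.mem_filter.mp hx).1).le (Real.exp_pos _).le
    have hZG : ‖Zc compat t G‖ ≤ Real.exp (Γ.len : ℝ) * ‖Zc compat t (A.erase Γ)‖ := by
      refine hchain.trans ?_
      refine mul_le_mul_of_nonneg_right ?_ (norm_nonneg _)
      apply Real.exp_le_exp.mpr; linarith
    have hrec := Zc_rec (compat := compat) (t := t) hΓA
    rw [← hGdef] at hrec
    have hdiff : Zc compat t A - Zc compat t (A.erase Γ) = t Γ * Zc compat t G := by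
      rw [hrec]; ring
    rw [hdiff, norm_mul]
    calc ‖t Γ‖ * ‖Zc compat t G‖
        ≤ ‖t Γ‖ * (Real.exp (Γ.len:ℝ) * ‖Zc compat t (A.erase Γ)‖) :=
          mul_le_mul_of_nonneg_left hZG (norm_nonneg _)
    _ = ‖t Γ‖ * Real.exp Γ.len * ‖Zc compat t (A.erase Γ)‖ := by ring

lemma dob_lower (hsym : ∀ Γ Γ', compat Γ Γ' → compat Γ' Γ)
    (P : Finset Ctr) (u : Ctr → ℝ)
    (hu : ∀ Γ ∈ P, 0 < u Γ)
    (hr : ∀ Γ ∈ P, u Γ * Real.exp Γ.len ≤ 1/2)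
    (hnb : ∀ Γ ∈ P, ∑ Γ' ∈ P.filter (fun Γ' => ¬ compat Γ' Γ), u Γ' * Real.exp Γ'.len
      ≤ (Γ.len : ℝ)/2)
    (t : Ctr → ℂ) (ht : ∀ Γ ∈ P, ‖t Γ‖ ≤ u Γ) :
    ∀ A ⊆ P, (1/2 : ℝ)^(A.card) ≤ ‖Zc compat t A‖ := by
  suffices H : ∀ m : ℕ, ∀ A ⊆ P, A.card ≤ m → (1/2 : ℝ)^(A.card) ≤ ‖Zc compat t A‖ by
    intro A hA; exact H A.card A hA le_rfl
  intro m
  induction m with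
  | zero =>
    intro A hA hc
    rw [Nat.le_zero, Finset.card_eq_zero] at hc
    subst hc
    rw [Zc_empty]
    simp
  | succ m ih =>
    intro A hA hc
    rcases Finset.eq_empty_or_nonempty A with rfl | ⟨Γ, hΓ⟩
    · rw [Zc_empty]; simp
    · have hΓP := hA hΓ
      have hAe : A.erase Γ ⊆ P := (Finset.erase_subset _ _).trans hA
      have hcard : (A.erase Γ).card ≤ m := by
        have h2 : (A.erase Γ).card = A.card - 1 := Finset.card_erase_of_mem hΓ
        have h3 : 1 ≤ A.card := Finset.card_pos.mpr ⟨Γ, hΓ⟩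
        omega
      have hlow := ih (A.erase Γ) hAe hcard
      have hd := dob hsym P u hu hr hnb t ht A hA Γ hΓ
      have hb : ‖t Γ‖ * Real.exp Γ.len ≤ 1/2 :=
        le_trans (mul_le_mul_of_nonneg_right (ht Γ hΓP) (Real.exp_pos _).le) (hr Γ hΓP)
      have h5 : ‖Zc compat t (A.erase Γ)‖ - ‖Zc compat t A‖
          ≤ ‖Zc compat t A - Zc compat t (A.erase Γ)‖ := by
        rw [norm_sub_rev]
        exact norm_sub_norm_le _ _
      have h6 : ‖Zc compat t A - Zc compat t (A.erase Γ)‖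
          ≤ (1/2) * ‖Zc compat t (A.erase Γ)‖ :=
        hd.trans (mul_le_mul_of_nonneg_right hb (norm_nonneg _))
      have h7 : (1/2) * ‖Zc compat t (A.erase Γ)‖ ≤ ‖Zc compat t A‖ := by linarith
      have hcc : A.card = (A.erase Γ).card + 1 := by
        rw [Finset.card_erase_of_mem hΓ]
        have h3 : 1 ≤ A.card := Finset.card_pos.mpr ⟨Γ, hΓ⟩
        omega
      rw [hcc, pow_succ]
      calc (1/2:ℝ)^(A.erase Γ).card * (1/2)
          ≤ ‖Zc compat t (A.erase Γ)‖ * (1/2) :=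
            mul_le_mul_of_nonneg_right hlow (by norm_num)
      _ = (1/2) * ‖Zc compat t (A.erase Γ)‖ := by ring
      _ ≤ ‖Zc compat t A‖ := h7

lemma dob_ne_zero (hsym : ∀ Γ Γ', compat Γ Γ' → compat Γ' Γ)
    (P : Finset Ctr) (u : Ctr → ℝ)
    (hu : ∀ Γ ∈ P, 0 < u Γ)
    (hr : ∀ Γ ∈ P, u Γ * Real.exp Γ.len ≤ 1/2)
    (hnb : ∀ Γ ∈ P, ∑ Γ' ∈ P.filter (fun Γ' => ¬ compat Γ' Γ), u Γ' * Real.exp Γ'.len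
      ≤ (Γ.len : ℝ)/2)
    (t : Ctr → ℂ) (ht : ∀ Γ ∈ P, ‖t Γ‖ ≤ u Γ)
    {A : Finset Ctr} (hA : A ⊆ P) : Zc compat t A ≠ 0 := by
  have := dob_lower hsym P u hu hr hnb t ht A hA
  intro h0
  rw [h0, norm_zero] at this
  have : (0:ℝ) < (1/2:ℝ)^(A.card) := by positivity
  linarith [dob_lower hsym P u hu hr hnb t ht A hA, this]
lemma ratio_facts (hsym : ∀ Γ Γ', compat Γ Γ' → compat Γ' Γ)
    (P : Finset Ctr) (u : Ctr → ℝ)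
    (hu : ∀ Γ ∈ P, 0 < u Γ)
    (hr : ∀ Γ ∈ P, u Γ * Real.exp Γ.len ≤ 1/2)
    (hnb : ∀ Γ ∈ P, ∑ Γ' ∈ P.filter (fun Γ' => ¬ compat Γ' Γ), u Γ' * Real.exp Γ'.len
      ≤ (Γ.len : ℝ)/2)
    (t : Ctr → ℂ) (ht : ∀ Γ ∈ P, ‖t Γ‖ ≤ u Γ)
    {C : Finset Ctr} (hC : C ⊆ P) {Γ₀ : Ctr} (hΓ₀ : Γ₀ ∈ C)
    {ρ0 : ℝ} (ht0 : ‖t Γ₀‖ ≤ ρ0) (hρ0 : ρ0 * Real.exp Γ₀.len ≤ 1/2) :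
    Zc compat t (C.erase Γ₀) ≠ 0 ∧
    ‖Zc compat t C / Zc compat t (C.erase Γ₀) - 1‖ ≤ ρ0 * Real.exp Γ₀.len ∧
    (Zc compat t C / Zc compat t (C.erase Γ₀)) ∈ Complex.slitPlane := by
  have hden := dob_ne_zero hsym P u hu hr hnb t ht (A := C.erase Γ₀)
    ((Finset.erase_subset Γ₀ C).trans hC)
  have hd := dob hsym P u hu hr hnb t ht C hC Γ₀ hΓ₀
  have hnear : ‖Zc compat t C / Zc compat t (C.erase Γ₀) - 1‖ ≤ ρ0 * Real.exp Γ₀.len := by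
    have heq : Zc compat t C / Zc compat t (C.erase Γ₀) - 1
        = (Zc compat t C - Zc compat t (C.erase Γ₀)) / Zc compat t (C.erase Γ₀) := by
      field_simp
    rw [heq, norm_div, div_le_iff₀ (norm_pos_iff.mpr hden)]
    calc ‖Zc compat t C - Zc compat t (C.erase Γ₀)‖
        ≤ ‖t Γ₀‖ * Real.exp Γ₀.len * ‖Zc compat t (C.erase Γ₀)‖ := hd
    _ ≤ ρ0 * Real.exp Γ₀.len * ‖Zc compat t (C.erase Γ₀)‖ := by
        refine mul_le_mul_of_nonneg_right ?_ (norm_nonneg _)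
        exact mul_le_mul_of_nonneg_right ht0 (Real.exp_pos _).le
  exact ⟨hden, hnear, re_pos_of_near_one (hnear.trans hρ0)⟩

end Dob

/-- Activities at a "corner" of the interpolation box. -/
noncomputable def cornert (ρ : Ctr → ℝ) (S A : Finset Ctr) (t : Ctr → ℂ) : Ctr → ℂ :=
  fun Γ => if Γ ∈ A then (ρ Γ : ℂ) else if Γ ∈ S then 0 else t Γ

lemma cornert_empty (ρ : Ctr → ℝ) (t : Ctr → ℂ) : cornert ρ ∅ ∅ t = t := by
  funext x; simp [cornert]

lemma cornert_insert_zero {S A : Finset Ctr} {Γ : Ctr} (hΓS : Γ ∉ S) (hAS : A ⊆ S)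
    (ρ : Ctr → ℝ) (t : Ctr → ℂ) :
    cornert ρ (insert Γ S) A t = cornert ρ S A (Function.update t Γ 0) := by
  funext x
  rcases eq_or_ne x Γ with rfl | hx
  · have hxA : x ∉ A := fun h => hΓS (hAS h)
    simp [cornert, hxA, hΓS]
  · by_cases hxA : x ∈ A
    · simp [cornert, hxA]
    · by_cases hxS : x ∈ S
      · simp [cornert, hxA, hxS, Finset.mem_insert, hx]
      · simp [cornert, hxA, hxS, Finset.mem_insert, hx, Function.update_of_ne hx]

lemma cornert_insert_rho {S A : Finset Ctr} {Γ : Ctr} (hΓS : Γ ∉ S) (hAS : A ⊆ S)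
    (ρ : Ctr → ℝ) (t : Ctr → ℂ) :
    cornert ρ (insert Γ S) (insert Γ A) t = cornert ρ S A (Function.update t Γ (ρ Γ)) := by
  funext x
  rcases eq_or_ne x Γ with rfl | hx
  · have hxA : x ∉ A := fun h => hΓS (hAS h)
    simp [cornert, hxA, hΓS]
  · by_cases hxA : x ∈ A
    · simp [cornert, hxA, Finset.mem_insert, hx]
    · by_cases hxS : x ∈ S
      · simp [cornert, hxA, hxS, Finset.mem_insert, hx]
      · simp [cornert, hxA, hxS, Finset.mem_insert, hx, Function.update_of_ne hx]

lemma cornert_update_comm {S A : Finset Ctr} {Γ : Ctr} (hΓA : Γ ∉ A) (hΓS : Γ ∉ S)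
    (ρ : Ctr → ℝ) (t : Ctr → ℂ) (z : ℂ) :
    cornert ρ S A (Function.update t Γ z) = Function.update (cornert ρ S A t) Γ z := by
  funext x
  rcases eq_or_ne x Γ with rfl | hx
  · simp [cornert, hΓA, hΓS]
  · by_cases hxA : x ∈ A
    · simp [cornert, hxA, Function.update_of_ne hx]
    · by_cases hxS : x ∈ S
      · simp [cornert, hxA, hxS, Function.update_of_ne hx]
      · simp [cornert, hxA, hxS, Function.update_of_ne hx]

lemma cornert_bound {P S A : Finset Ctr} {ρ u : Ctr → ℝ} {t : Ctr → ℂ}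
    (hρ0 : ∀ Γ ∈ P, 0 ≤ ρ Γ) (hρu : ∀ Γ ∈ P, ρ Γ ≤ u Γ) (hu : ∀ Γ ∈ P, 0 < u Γ)
    (ht : ∀ Γ ∈ P, ‖t Γ‖ ≤ u Γ) :
    ∀ Γ' ∈ P, ‖cornert ρ S A t Γ'‖ ≤ u Γ' := by
  intro Γ' hΓ'
  by_cases hA : Γ' ∈ A
  · simp only [cornert, hA, if_true]
    rw [Complex.norm_real, Real.norm_eq_abs, abs_of_nonneg (hρ0 Γ' hΓ')]
    exact hρu Γ' hΓ'
  · by_cases hS : Γ' ∈ S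
    · simp only [cornert, hA, if_false, hS, if_true]
      rw [norm_zero]
      exact (hu Γ' hΓ').le
    · simp only [cornert, hA, if_false, hS]
      exact ht Γ' hΓ'

lemma cornert_at {S A : Finset Ctr} {Γ₀ : Ctr} (hΓ₀A : Γ₀ ∉ A) (hΓ₀S : Γ₀ ∉ S)
    (ρ : Ctr → ℝ) (t : Ctr → ℂ) : cornert ρ S A t Γ₀ = t Γ₀ := by
  simp [cornert, hΓ₀A, hΓ₀S]

/-- Iterated Möbius difference of `log (Z C / Z (C \ Γ₀))` over the box of activities. -/
noncomputable def PhiD (compat : Ctr → Ctr → Prop) (ρ : Ctr → ℝ) (C : Finset Ctr) (Γ₀ : Ctr)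
    (S : Finset Ctr) (t : Ctr → ℂ) : ℂ :=
  ∑ A ∈ S.powerset, (-1 : ℂ) ^ (S.card - A.card) *
    Complex.log (Zc compat (cornert ρ S A t) C / Zc compat (cornert ρ S A t) (C.erase Γ₀))

lemma PhiD_empty (compat : Ctr → Ctr → Prop) (ρ : Ctr → ℝ) (C : Finset Ctr) (Γ₀ : Ctr)
    (t : Ctr → ℂ) :
    PhiD compat ρ C Γ₀ ∅ t = Complex.log (Zc compat t C / Zc compat t (C.erase Γ₀)) := by
  rw [PhiD, Finset.powerset_empty, Finset.sum_singleton, cornert_empty]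
  simp

lemma PhiD_insert (compat : Ctr → Ctr → Prop) (ρ : Ctr → ℝ) (C : Finset Ctr) (Γ₀ : Ctr)
    {S : Finset Ctr} {Γ : Ctr} (hΓ : Γ ∉ S) (t : Ctr → ℂ) :
    PhiD compat ρ C Γ₀ (insert Γ S) t =
      PhiD compat ρ C Γ₀ S (Function.update t Γ (ρ Γ))
        - PhiD compat ρ C Γ₀ S (Function.update t Γ 0) := by
  rw [PhiD, Finset.sum_powerset_insert hΓ]
  have hcard : (insert Γ S).card = S.card + 1 := Finset.card_insert_of_notMem hΓ
  have h1 : ∀ A ∈ S.powerset,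
      (-1 : ℂ) ^ ((insert Γ S).card - A.card) *
        Complex.log (Zc compat (cornert ρ (insert Γ S) A t) C
          / Zc compat (cornert ρ (insert Γ S) A t) (C.erase Γ₀))
      = -((-1 : ℂ) ^ (S.card - A.card) *
        Complex.log (Zc compat (cornert ρ S A (Function.update t Γ 0)) C
          / Zc compat (cornert ρ S A (Function.update t Γ 0)) (C.erase Γ₀))) := by
    intro A hA
    rw [Finset.mem_powerset] at hA
    rw [cornert_insert_zero hΓ hA, hcard]
    have hle : A.card ≤ S.card := Finset.card_le_card hA
    have : S.card + 1 - A.card = (S.card - A.card) + 1 := by omega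
    rw [this, pow_succ]
    ring
  have h2 : ∀ A ∈ S.powerset,
      (-1 : ℂ) ^ ((insert Γ S).card - (insert Γ A).card) *
        Complex.log (Zc compat (cornert ρ (insert Γ S) (insert Γ A) t) C
          / Zc compat (cornert ρ (insert Γ S) (insert Γ A) t) (C.erase Γ₀))
      = (-1 : ℂ) ^ (S.card - A.card) *
        Complex.log (Zc compat (cornert ρ S A (Function.update t Γ (ρ Γ))) C
          / Zc compat (cornert ρ S A (Function.update t Γ (ρ Γ))) (C.erase Γ₀)) := by
    intro A hA
    rw [Finset.mem_powerset] at hA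
    have hΓA : Γ ∉ A := fun h => hΓ (hA h)
    rw [cornert_insert_rho hΓ hA, hcard, Finset.card_insert_of_notMem hΓA]
    have : S.card + 1 - (A.card + 1) = S.card - A.card := by omega
    rw [this]
  rw [Finset.sum_congr rfl h1, Finset.sum_congr rfl h2, Finset.sum_neg_distrib]
  rw [PhiD, PhiD]
  ring
lemma PhiD_bound {compat : Ctr → Ctr → Prop}
    (hsym : ∀ Γ Γ', compat Γ Γ' → compat Γ' Γ)
    (P : Finset Ctr) (u ρ : Ctr → ℝ)
    (hu : ∀ Γ ∈ P, 0 < u Γ)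
    (hr : ∀ Γ ∈ P, u Γ * Real.exp Γ.len ≤ 1/2)
    (hnb : ∀ Γ ∈ P, ∑ Γ' ∈ P.filter (fun Γ' => ¬ compat Γ' Γ), u Γ' * Real.exp Γ'.len
      ≤ (Γ.len : ℝ)/2)
    (hρ0 : ∀ Γ ∈ P, 0 ≤ ρ Γ) (hρu : ∀ Γ ∈ P, ρ Γ < u Γ)
    {C : Finset Ctr} (hC : C ⊆ P) {Γ₀ : Ctr} (hΓ₀ : Γ₀ ∈ C)
    (hM0 : ρ Γ₀ * Real.exp Γ₀.len ≤ 1/2) :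
    ∀ S : Finset Ctr, S ⊆ C.erase Γ₀ → ∀ t : Ctr → ℂ,
      (∀ Γ ∈ P, ‖t Γ‖ ≤ u Γ) → ‖t Γ₀‖ ≤ ρ Γ₀ →
      ‖PhiD compat ρ C Γ₀ S t‖
        ≤ 2 * (ρ Γ₀ * Real.exp Γ₀.len) * ∏ Γ ∈ S, (4 * ρ Γ / u Γ) := by
  have hΓ₀P : Γ₀ ∈ P := hC hΓ₀
  have hρ00 : 0 ≤ ρ Γ₀ := hρ0 Γ₀ hΓ₀P
  intro S
  induction S using Finset.induction_on with
  | empty =>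
    intro _ t ht ht0
    rw [PhiD_empty, Finset.prod_empty, mul_one]
    obtain ⟨hden, hnear, hslit⟩ := ratio_facts hsym P u hu hr hnb t ht hC hΓ₀ ht0 hM0
    calc ‖Complex.log (Zc compat t C / Zc compat t (C.erase Γ₀))‖
        ≤ 2 * ‖Zc compat t C / Zc compat t (C.erase Γ₀) - 1‖ :=
          norm_log_near_one (hnear.trans hM0)
    _ ≤ 2 * (ρ Γ₀ * Real.exp Γ₀.len) := by linarith
  | @insert Γ S hΓS ih =>
    intro hsub t ht ht0
    have hS : S ⊆ C.erase Γ₀ := (Finset.subset_insert Γ S).trans hsub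
    have hΓC : Γ ∈ C.erase Γ₀ := hsub (Finset.mem_insert_self _ _)
    have hΓne : Γ ≠ Γ₀ := (Finset.mem_erase.mp hΓC).1
    have hΓinC : Γ ∈ C := (Finset.mem_erase.mp hΓC).2
    have hΓP : Γ ∈ P := hC hΓinC
    have hΓ₀S : Γ₀ ∉ S := fun h => (Finset.mem_erase.mp (hS h)).1 rfl
    set M := 2 * (ρ Γ₀ * Real.exp Γ₀.len) * ∏ Γ' ∈ S, (4 * ρ Γ' / u Γ') with hMdef
    have hM : 0 ≤ M := by
      apply mul_nonneg
      · apply mul_nonneg (by norm_num)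
        exact mul_nonneg hρ00 (Real.exp_pos _).le
      · apply Finset.prod_nonneg
        intro x hx
        have hxP : x ∈ P := hC (Finset.mem_of_mem_erase (hS hx))
        exact div_nonneg (by nlinarith [hρ0 x hxP]) (hu x hxP).le
    set g : ℂ → ℂ := fun z => PhiD compat ρ C Γ₀ S (Function.update t Γ z) with hgdef
    have hgb : ∀ z ∈ Metric.ball (0:ℂ) (u Γ), ‖g z‖ ≤ M := by
      intro z hz
      rw [Metric.mem_ball, dist_zero_right] at hz
      apply ih hS
      · intro Γ' hΓ'
        rcases eq_or_ne Γ' Γ with rfl | hne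
        · rw [Function.update_self]; exact hz.le
        · rw [Function.update_of_ne hne]; exact ht Γ' hΓ'
      · rw [Function.update_of_ne (Ne.symm hΓne)]; exact ht0
    have hgdiff : DifferentiableOn ℂ g (Metric.ball 0 (u Γ)) := by
      apply DifferentiableOn.fun_sum
      intro A hA
      have hAS : A ⊆ S := Finset.mem_powerset.mp hA
      have hΓA : Γ ∉ A := fun h => hΓS (hAS h)
      apply DifferentiableOn.const_mul
      have hfun : ∀ D : Finset Ctr, Γ ∈ D →
          (fun z : ℂ => Zc compat (cornert ρ S A (Function.update t Γ z)) D)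
          = (fun z : ℂ => Zc compat (cornert ρ S A t) (D.erase Γ)
              + z * Zc compat (cornert ρ S A t)
                ((D.erase Γ).filter (fun Γ' => compat Γ' Γ ∧ compat Γ Γ'))) := by
        intro D hΓD
        funext z
        rw [cornert_update_comm hΓA hΓS, Zc_rec (compat := compat) hΓD, Function.update_self]
        have e1 : Zc compat (Function.update (cornert ρ S A t) Γ z) (D.erase Γ)
            = Zc compat (cornert ρ S A t) (D.erase Γ) :=
          Zc_congr compat fun γ hγ => Function.update_of_ne (Finset.mem_erase.mp hγ).1 _ _
        have e2 : Zc compat (Function.update (cornert ρ S A t) Γ z)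
              ((D.erase Γ).filter (fun Γ' => compat Γ' Γ ∧ compat Γ Γ'))
            = Zc compat (cornert ρ S A t)
              ((D.erase Γ).filter (fun Γ' => compat Γ' Γ ∧ compat Γ Γ')) := by
          refine Zc_congr compat fun γ hγ => ?_
          have hγe : γ ∈ D.erase Γ := Finset.mem_of_mem_filter γ hγ
          exact Function.update_of_ne (Finset.mem_erase.mp hγe).1 _ _
        rw [e1, e2]
      intro z hz
      rw [Metric.mem_ball, dist_zero_right] at hz
      apply DifferentiableAt.differentiableWithinAt
      have htc : cornert ρ S A (Function.update t Γ z)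
          = Function.update (cornert ρ S A t) Γ z := cornert_update_comm hΓA hΓS ρ t z
      set t' := Function.update (cornert ρ S A t) Γ z with ht'def
      have hΓ₀A : Γ₀ ∉ A := fun h => hΓ₀S (hAS h)
      have ht'P : ∀ Γ' ∈ P, ‖t' Γ'‖ ≤ u Γ' := by
        intro Γ' hΓ'
        rcases eq_or_ne Γ' Γ with rfl | hne
        · rw [ht'def, Function.update_self]; exact hz.le
        · rw [ht'def, Function.update_of_ne hne]
          exact cornert_bound hρ0 (fun x hx => (hρu x hx).le) hu ht Γ' hΓ'
      have ht'0 : ‖t' Γ₀‖ ≤ ρ Γ₀ := by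
        rw [ht'def, Function.update_of_ne (Ne.symm hΓne), cornert_at hΓ₀A hΓ₀S]
        exact ht0
      obtain ⟨hden, hnear, hslit⟩ := ratio_facts hsym P u hu hr hnb t' ht'P hC hΓ₀ ht'0 hM0
      have hnum : DifferentiableAt ℂ
          (fun w => Zc compat (cornert ρ S A (Function.update t Γ w)) C) z := by
        rw [hfun C hΓinC]
        exact (differentiableAt_const _).add (differentiableAt_id.mul (differentiableAt_const _))
      have hdend : DifferentiableAt ℂ
          (fun w => Zc compat (cornert ρ S A (Function.update t Γ w)) (C.erase Γ₀)) z := by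
        rw [hfun (C.erase Γ₀) hΓC]
        exact (differentiableAt_const _).add (differentiableAt_id.mul (differentiableAt_const _))
      have hdenne : Zc compat (cornert ρ S A (Function.update t Γ z)) (C.erase Γ₀) ≠ 0 := by
        rw [htc]; exact hden
      have hdiv := hnum.div hdend hdenne
      apply DifferentiableAt.clog hdiv
      simp only [Pi.div_apply]
      rw [htc]
      exact hslit
    have hupd : PhiD compat ρ C Γ₀ (insert Γ S) t = g ((ρ Γ : ℝ) : ℂ) - g 0 := by
      rw [PhiD_insert compat ρ C Γ₀ hΓS t]
    have hρΓball : ((ρ Γ : ℝ) : ℂ) ∈ Metric.ball (0:ℂ) (u Γ) := by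
      rw [Metric.mem_ball, dist_zero_right, Complex.norm_real, Real.norm_eq_abs,
        abs_of_nonneg (hρ0 Γ hΓP)]
      exact hρu Γ hΓP
    have hschwarz := schwarz_diff (hu Γ hΓP) hM hgdiff hgb hρΓball
    rw [hupd]
    calc ‖g ((ρ Γ : ℝ) : ℂ) - g 0‖ ≤ 3 * M / u Γ * ‖((ρ Γ : ℝ) : ℂ)‖ := hschwarz
    _ = 3 * M * ρ Γ / u Γ := by
        rw [Complex.norm_real, Real.norm_eq_abs, abs_of_nonneg (hρ0 Γ hΓP)]; ring
    _ ≤ 4 * M * ρ Γ / u Γ := by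
        have huΓ : (0:ℝ) < u Γ := hu Γ hΓP
        have hnum : 3 * M * ρ Γ ≤ 4 * M * ρ Γ := by nlinarith [hρ0 Γ hΓP, hM]
        exact (div_le_div_iff_of_pos_right huΓ).mpr hnum
    _ = 2 * (ρ Γ₀ * Real.exp Γ₀.len) * ((4 * ρ Γ / u Γ) * ∏ Γ' ∈ S, (4 * ρ Γ' / u Γ')) := by
        rw [hMdef]; ring
    _ = 2 * (ρ Γ₀ * Real.exp Γ₀.len) * ∏ Γ' ∈ insert Γ S, (4 * ρ Γ' / u Γ') := by
        rw [Finset.prod_insert hΓS]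
lemma rho_pos (β : ℝ) (η : ℤ × ℤ → ℝ) (Γ : Ctr) : 0 < rho β η Γ := Real.exp_pos _

lemma phi_eq_PhiD (β : ℝ) (η : ℤ × ℤ → ℝ) (compat : Ctr → Ctr → Prop)
    {C : Finset Ctr} {Γ₀ : Ctr} (hΓ₀ : Γ₀ ∈ C) :
    ((phi β η compat C : ℝ) : ℂ)
      = PhiD compat (rho β η) C Γ₀ (C.erase Γ₀) (fun Γ => ((rho β η Γ : ℝ) : ℂ)) := by
  classical
  set S₀ := C.erase Γ₀ with hS₀def
  set tρ : Ctr → ℂ := fun Γ => ((rho β η Γ : ℝ) : ℂ) with htρdef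
  have hΓ₀S₀ : Γ₀ ∉ S₀ := Finset.notMem_erase _ _
  have hcardpos : 1 ≤ C.card := Finset.card_pos.mpr ⟨Γ₀, hΓ₀⟩
  have hcard : C.card = S₀.card + 1 := by
    rw [hS₀def, Finset.card_erase_of_mem hΓ₀]; omega
  set T : ℂ := ∑ A ∈ S₀.powerset, ((-1:ℂ)^(S₀.card - A.card)) *
      (((Real.log (polyZ β η compat (insert Γ₀ A)) : ℝ) : ℂ)
        - ((Real.log (polyZ β η compat A) : ℝ) : ℂ)) with hTdef
  have hRHS : PhiD compat (rho β η) C Γ₀ S₀ tρ = T := by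
    rw [PhiD, hTdef]
    refine Finset.sum_congr rfl fun A hA => ?_
    have hAS : A ⊆ S₀ := Finset.mem_powerset.mp hA
    have hΓ₀A : Γ₀ ∉ A := fun h => hΓ₀S₀ (hAS h)
    have hins_sub : insert Γ₀ A ⊆ C :=
      Finset.insert_subset hΓ₀ (hAS.trans (Finset.erase_subset _ _))
    have h1 : Zc compat (cornert (rho β η) S₀ A tρ) C
        = ((polyZ β η compat (insert Γ₀ A) : ℝ) : ℂ) := by
      rw [Zc_subset compat hins_sub ?hz]
      case hz =>
        intro γ hγC hγni
        have hγA : γ ∉ A := fun h => hγni (Finset.mem_insert_of_mem h)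
        have hγne : γ ≠ Γ₀ := fun h => hγni (h ▸ Finset.mem_insert_self _ _)
        have hγS : γ ∈ S₀ := by rw [hS₀def, Finset.mem_erase]; exact ⟨hγne, hγC⟩
        simp [cornert, hγA, hγS]
      rw [show Zc compat (cornert (rho β η) S₀ A tρ) (insert Γ₀ A)
          = Zc compat tρ (insert Γ₀ A) from Zc_congr compat ?hc]
      case hc =>
        intro γ hγ
        rcases Finset.mem_insert.mp hγ with rfl | hγA
        · exact cornert_at hΓ₀A hΓ₀S₀ _ _
        · simp [cornert, hγA, htρdef]
      exact Zc_real compat β η _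
    have h2 : Zc compat (cornert (rho β η) S₀ A tρ) (C.erase Γ₀)
        = ((polyZ β η compat A : ℝ) : ℂ) := by
      rw [← hS₀def]
      rw [Zc_subset compat hAS ?hz2]
      case hz2 =>
        intro γ hγS hγA
        simp [cornert, hγA, hγS]
      rw [show Zc compat (cornert (rho β η) S₀ A tρ) A
          = Zc compat tρ A from Zc_congr compat fun γ hγ => by simp [cornert, hγ, htρdef]]
      exact Zc_real compat β η _
    rw [h1, h2]
    have hx := polyZ_pos compat β η (insert Γ₀ A)
    have hy := polyZ_pos compat β η A
    congr 1
    rw [← Complex.ofReal_div, ← Complex.ofReal_log (div_nonneg hx.le hy.le),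
      Real.log_div hx.ne' hy.ne', Complex.ofReal_sub]
  rw [hRHS, hTdef]
  rw [phi, Complex.ofReal_sum]
  have hins : insert Γ₀ S₀ = C := Finset.insert_erase hΓ₀
  have hstep : ∑ A ∈ C.powerset,
      ((((-1:ℝ)^(C.card - A.card) * Real.log (polyZ β η compat A) : ℝ)) : ℂ)
      = ∑ A ∈ S₀.powerset,
          ((((-1:ℝ)^(C.card - A.card) * Real.log (polyZ β η compat A) : ℝ)) : ℂ)
        + ∑ A ∈ S₀.powerset,
          ((((-1:ℝ)^(C.card - (insert Γ₀ A).card)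
              * Real.log (polyZ β η compat (insert Γ₀ A)) : ℝ)) : ℂ) := by
    rw [← hins, Finset.sum_powerset_insert hΓ₀S₀]
  rw [hstep]
  have hsign1 : ∀ A ∈ S₀.powerset,
      ((((-1:ℝ)^(C.card - A.card) * Real.log (polyZ β η compat A) : ℝ)) : ℂ)
      = -((-1:ℂ)^(S₀.card - A.card) * ((Real.log (polyZ β η compat A) : ℝ) : ℂ)) := by
    intro A hA
    have ha : A.card ≤ S₀.card := Finset.card_le_card (Finset.mem_powerset.mp hA)
    have h2 : C.card - A.card = (S₀.card - A.card) + 1 := by omega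
    push_cast
    rw [h2, pow_succ]
    ring
  have hsign2 : ∀ A ∈ S₀.powerset,
      ((((-1:ℝ)^(C.card - (insert Γ₀ A).card)
          * Real.log (polyZ β η compat (insert Γ₀ A)) : ℝ)) : ℂ)
      = (-1:ℂ)^(S₀.card - A.card)
          * ((Real.log (polyZ β η compat (insert Γ₀ A)) : ℝ) : ℂ) := by
    intro A hA
    have hAS := Finset.mem_powerset.mp hA
    have hΓ₀A : Γ₀ ∉ A := fun h => hΓ₀S₀ (hAS h)
    have ha : A.card ≤ S₀.card := Finset.card_le_card hAS
    have h3 : (insert Γ₀ A).card = A.card + 1 := Finset.card_insert_of_notMem hΓ₀A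
    have h4 : C.card - (insert Γ₀ A).card = S₀.card - A.card := by omega
    push_cast
    rw [h4]
  rw [Finset.sum_congr rfl hsign1, Finset.sum_congr rfl hsign2]
  rw [Finset.sum_neg_distrib]
  rw [show (∑ A ∈ S₀.powerset, ((-1:ℂ)^(S₀.card - A.card)) *
      (((Real.log (polyZ β η compat (insert Γ₀ A)) : ℝ) : ℂ)
        - ((Real.log (polyZ β η compat A) : ℝ) : ℂ)))
      = ∑ A ∈ S₀.powerset, (((-1:ℂ)^(S₀.card - A.card)) *
          ((Real.log (polyZ β η compat (insert Γ₀ A)) : ℝ) : ℂ)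
        - ((-1:ℂ)^(S₀.card - A.card)) * ((Real.log (polyZ β η compat A) : ℝ) : ℂ))
      from Finset.sum_congr rfl fun A _ => by ring]
  rw [Finset.sum_sub_distrib]
  ring

lemma phi_cluster_bound {compat : Ctr → Ctr → Prop}
    (hsym : ∀ Γ Γ', compat Γ Γ' → compat Γ' Γ)
    (P : Finset Ctr) (u : Ctr → ℝ) (β : ℝ) (η : ℤ × ℤ → ℝ)
    (hu : ∀ Γ ∈ P, 0 < u Γ)
    (hr : ∀ Γ ∈ P, u Γ * Real.exp Γ.len ≤ 1/2)
    (hnb : ∀ Γ ∈ P, ∑ Γ' ∈ P.filter (fun Γ' => ¬ compat Γ' Γ), u Γ' * Real.exp Γ'.len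
      ≤ (Γ.len : ℝ)/2)
    (hρu : ∀ Γ ∈ P, rho β η Γ < u Γ)
    (hM0 : ∀ Γ ∈ P, rho β η Γ * Real.exp Γ.len ≤ 1/2)
    {C : Finset Ctr} (hC : C ⊆ P) {Γ₀ : Ctr} (hΓ₀ : Γ₀ ∈ C) :
    |phi β η compat C|
      ≤ 2 * (rho β η Γ₀ * Real.exp Γ₀.len) * ∏ Γ ∈ C.erase Γ₀, (4 * rho β η Γ / u Γ) := by
  have h1 : |phi β η compat C| = ‖((phi β η compat C : ℝ) : ℂ)‖ := by
    rw [Complex.norm_real, Real.norm_eq_abs]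
  rw [h1, phi_eq_PhiD β η compat hΓ₀]
  refine PhiD_bound hsym P u (rho β η) hu hr hnb
    (fun Γ _ => (Real.exp_pos _).le) hρu hC hΓ₀ (hM0 Γ₀ (hC hΓ₀))
    (C.erase Γ₀) (Finset.Subset.refl _) _ ?_ ?_
  · intro Γ hΓ
    rw [Complex.norm_real, Real.norm_eq_abs, abs_of_nonneg (rho_pos β η Γ).le]
    exact (hρu Γ hΓ).le
  · rw [Complex.norm_real, Real.norm_eq_abs, abs_of_nonneg (rho_pos β η Γ₀).le]
section Comp

variable {compat : Ctr → Ctr → Prop}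

/-- Reachability inside a finite set along incompatibility. -/
def Reach (compat : Ctr → Ctr → Prop) (B : Finset Ctr) : Ctr → Ctr → Prop :=
  Relation.ReflTransGen (fun x y => y ∈ B ∧ ¬ compat x y)

/-- Connected component of `a` inside `B` for the incompatibility graph. -/
noncomputable def ccomp (compat : Ctr → Ctr → Prop) (B : Finset Ctr) (a : Ctr) : Finset Ctr :=
  B.filter (Reach compat B a)

lemma ccomp_subset (B : Finset Ctr) (a : Ctr) : ccomp compat B a ⊆ B :=
  Finset.filter_subset _ _

lemma mem_ccomp_self {B : Finset Ctr} {a : Ctr} (ha : a ∈ B) : a ∈ ccomp compat B a := by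
  rw [ccomp, Finset.mem_filter]
  exact ⟨ha, Relation.ReflTransGen.refl⟩

lemma reach_mem {B : Finset Ctr} {a b : Ctr} (h : Reach compat B a b) (ha : a ∈ B) :
    b ∈ B := by
  induction h with
  | refl => exact ha
  | tail _ hstep _ => exact hstep.1

lemma reach_symm (hsym : ∀ Γ Γ', compat Γ Γ' → compat Γ' Γ)
    {B : Finset Ctr} {a b : Ctr} (ha : a ∈ B) (h : Reach compat B a b) :
    Reach compat B b a := by
  induction h with
  | refl => exact Relation.ReflTransGen.refl
  | @tail b c hab hstep ih =>
    refine Relation.ReflTransGen.head ⟨reach_mem hab ha, ?_⟩ ih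
    exact fun hcb => hstep.2 (hsym _ _ hcb)

lemma ccomp_eq (hsym : ∀ Γ Γ', compat Γ Γ' → compat Γ' Γ)
    {B : Finset Ctr} {a b : Ctr} (ha : a ∈ B) (hb : b ∈ ccomp compat B a) :
    ccomp compat B a = ccomp compat B b := by
  rw [ccomp, Finset.mem_filter] at hb
  obtain ⟨hbB, hab⟩ := hb
  ext x
  rw [ccomp, ccomp, Finset.mem_filter, Finset.mem_filter]
  constructor
  · rintro ⟨hxB, hax⟩
    exact ⟨hxB, Relation.ReflTransGen.trans (reach_symm hsym ha hab) hax⟩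
  · rintro ⟨hxB, hbx⟩
    exact ⟨hxB, Relation.ReflTransGen.trans hab hbx⟩

lemma ccomp_extend {B : Finset Ctr} {a b c : Ctr} (hb : b ∈ ccomp compat B a)
    (hc : c ∈ B) (hnc : ¬ compat b c) : c ∈ ccomp compat B a := by
  rw [ccomp, Finset.mem_filter] at hb ⊢
  exact ⟨hc, Relation.ReflTransGen.tail hb.2 ⟨hc, hnc⟩⟩

lemma singleton_cluster (compat : Ctr → Ctr → Prop) (Γ : Ctr) :
    IsClusterC compat {Γ} := by
  refine ⟨⟨Γ, Finset.mem_singleton_self Γ⟩, ?_⟩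
  rintro ⟨C₁, C₂, ⟨x₁, hx₁⟩, ⟨x₂, hx₂⟩, hdis, hcov, -⟩
  have h1 : x₁ = Γ := Finset.mem_singleton.mp ((hcov x₁).mpr (Or.inl hx₁))
  have h2 : x₂ = Γ := Finset.mem_singleton.mp ((hcov x₂).mpr (Or.inr hx₂))
  exact Finset.disjoint_left.mp hdis hx₁ (by rw [h1, ← h2]; exact hx₂)

lemma ccomp_cluster (hsym : ∀ Γ Γ', compat Γ Γ' → compat Γ' Γ)
    {B : Finset Ctr} {a : Ctr} (ha : a ∈ B) :
    IsClusterC compat (ccomp compat B a) := by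
  refine ⟨⟨a, mem_ccomp_self ha⟩, ?_⟩
  rintro ⟨C₁, C₂, ⟨x₁, hx₁⟩, ⟨x₂, hx₂⟩, hdis, hcov, hcross⟩
  have main : ∀ (D₁ D₂ : Finset Ctr),
      (∀ Γ, Γ ∈ ccomp compat B a ↔ (Γ ∈ D₁ ∨ Γ ∈ D₂)) → Disjoint D₁ D₂ →
      (∀ x ∈ D₁, ∀ y ∈ D₂, compat x y) → a ∈ D₁ →
      ∀ b, Reach compat B a b → b ∈ D₁ := by
    intro D₁ D₂ hcov' hdis' hcross' haD b hreach
    induction hreach with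
    | refl => exact haD
    | @tail b c hab hstep ih =>
      have hbD : b ∈ D₁ := ih
      have hcc : c ∈ ccomp compat B a := by
        rw [ccomp, Finset.mem_filter]
        exact ⟨hstep.1, Relation.ReflTransGen.tail hab hstep⟩
      rcases (hcov' c).mp hcc with hc1 | hc2
      · exact hc1
      · exact absurd (hcross' b hbD c hc2) hstep.2
  have haC : a ∈ ccomp compat B a := mem_ccomp_self ha
  rcases (hcov a).mp haC with haD | haD
  · have hx₂' : x₂ ∈ ccomp compat B a := (hcov x₂).mpr (Or.inr hx₂)
    have hreach : Reach compat B a x₂ := (Finset.mem_filter.mp hx₂').2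
    have : x₂ ∈ C₁ := main C₁ C₂ hcov hdis hcross haD x₂ hreach
    exact Finset.disjoint_left.mp hdis this hx₂
  · have hx₁' : x₁ ∈ ccomp compat B a := (hcov x₁).mpr (Or.inl hx₁)
    have hreach : Reach compat B a x₁ := (Finset.mem_filter.mp hx₁').2
    have hcross' : ∀ x ∈ C₂, ∀ y ∈ C₁, compat x y := fun x hx y hy =>
      hsym _ _ (hcross y hy x hx)
    have hcov' : ∀ Γ, Γ ∈ ccomp compat B a ↔ (Γ ∈ C₂ ∨ Γ ∈ C₁) := by
      intro Γ; rw [hcov Γ]; tauto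
    have : x₁ ∈ C₂ := main C₂ C₁ hcov' hdis.symm hcross' haD x₁ hreach
    exact Finset.disjoint_left.mp hdis hx₁ this

lemma ccomp_meets (hsym : ∀ Γ Γ', compat Γ Γ' → compat Γ' Γ)
    {C : Finset Ctr} (hC : IsClusterC compat C) {Γ : Ctr} (hΓ : Γ ∈ C) {a : Ctr}
    (ha : a ∈ C.erase Γ) :
    ∃ d ∈ ccomp compat (C.erase Γ) a, ¬ compat d Γ := by
  by_contra hcon
  push_neg at hcon
  apply hC.2
  have hsubC : ccomp compat (C.erase Γ) a ⊆ C :=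
    (ccomp_subset _ _).trans (Finset.erase_subset _ _)
  have hΓnc : Γ ∉ ccomp compat (C.erase Γ) a := fun h =>
    (Finset.mem_erase.mp (ccomp_subset _ _ h)).1 rfl
  refine ⟨C \ ccomp compat (C.erase Γ) a, ccomp compat (C.erase Γ) a,
    ⟨Γ, Finset.mem_sdiff.mpr ⟨hΓ, hΓnc⟩⟩, ⟨a, mem_ccomp_self ha⟩,
    Finset.sdiff_disjoint, ?_, ?_⟩
  · intro x
    constructor
    · intro hx
      by_cases h : x ∈ ccomp compat (C.erase Γ) a
      · exact Or.inr h
      · exact Or.inl (Finset.mem_sdiff.mpr ⟨hx, h⟩)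
    · rintro (hx | hx)
      · exact (Finset.mem_sdiff.mp hx).1
      · exact hsubC hx
  · intro c hc d hd
    rw [Finset.mem_sdiff] at hc
    by_contra hnc
    rcases eq_or_ne c Γ with rfl | hcne
    · exact hnc (hsym _ _ (hcon d hd))
    · have hcE : c ∈ C.erase Γ := Finset.mem_erase.mpr ⟨hcne, hc.1⟩
      have hndc : ¬ compat d c := fun h => hnc (hsym _ _ h)
      exact hc.2 (ccomp_extend hd hcE hndc)

lemma reach_mono {B B' : Finset Ctr} (hBB : B ⊆ B') {a b : Ctr}
    (h : Reach compat B a b) : Reach compat B' a b := by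
  induction h with
  | refl => exact Relation.ReflTransGen.refl
  | tail _ hstep ih => exact Relation.ReflTransGen.tail ih ⟨hBB hstep.1, hstep.2⟩

lemma ccomp_stable {B D : Finset Ctr} {a : Ctr} (ha : a ∈ B)
    (hdis : ∀ x ∈ ccomp compat B a, x ∉ D) :
    ccomp compat (B \ D) a = ccomp compat B a := by
  ext x
  rw [ccomp, ccomp, Finset.mem_filter, Finset.mem_filter]
  constructor
  · rintro ⟨hxB, hax⟩
    exact ⟨(Finset.mem_sdiff.mp hxB).1, reach_mono Finset.sdiff_subset hax⟩
  · rintro ⟨hxB, hax⟩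
    have key : ∀ b, Reach compat B a b → Reach compat (B \ D) a b := by
      intro b h
      induction h with
      | refl => exact Relation.ReflTransGen.refl
      | @tail b c hab hstep ih =>
        have hcc : c ∈ ccomp compat B a := by
          rw [ccomp, Finset.mem_filter]
          exact ⟨hstep.1, Relation.ReflTransGen.tail hab hstep⟩
        exact Relation.ReflTransGen.tail ih
          ⟨Finset.mem_sdiff.mpr ⟨hstep.1, hdis c hcc⟩, hstep.2⟩
    have hxc : x ∈ ccomp compat B a := Finset.mem_filter.mpr ⟨hxB, hax⟩
    exact ⟨Finset.mem_sdiff.mpr ⟨hxB, hdis x hxc⟩, key x hax⟩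

end Comp

/-- A fixed choice of an element from a nonempty finite set of contours. -/
noncomputable def pickF (s : Finset Ctr) : Ctr :=
  if h : s.Nonempty then h.choose else ⟨∅, 0, ∅⟩

lemma pickF_mem {s : Finset Ctr} (h : s.Nonempty) : pickF s ∈ s := by
  rw [pickF, dif_pos h]
  exact h.choose_spec
/-- Clusters inside `A` containing `Γ`, with all components of `C ∖ Γ` represented in `X`. -/
noncomputable def goodSet (compat : Ctr → Ctr → Prop) (A : Finset Ctr) (Γ : Ctr)
    (N X : Finset Ctr) : Finset (Finset Ctr) :=
  A.powerset.filter (fun C => IsClusterC compat C ∧ Γ ∈ C ∧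
    ∀ a ∈ C.erase Γ, pickF (ccomp compat (C.erase Γ) a ∩ N) ∈ X)

/-- Clusters inside `A` containing `Γ`. -/
noncomputable def clSet (compat : Ctr → Ctr → Prop) (A : Finset Ctr) (Γ : Ctr) :
    Finset (Finset Ctr) :=
  A.powerset.filter (fun C => IsClusterC compat C ∧ Γ ∈ C)

lemma mem_goodSet {compat : Ctr → Ctr → Prop} {A : Finset Ctr} {Γ : Ctr}
    {N X C : Finset Ctr} :
    C ∈ goodSet compat A Γ N X ↔ C ⊆ A ∧ IsClusterC compat C ∧ Γ ∈ C ∧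
      ∀ a ∈ C.erase Γ, pickF (ccomp compat (C.erase Γ) a ∩ N) ∈ X := by
  rw [goodSet, Finset.mem_filter, Finset.mem_powerset]

lemma mem_clSet {compat : Ctr → Ctr → Prop} {A : Finset Ctr} {Γ : Ctr} {C : Finset Ctr} :
    C ∈ clSet compat A Γ ↔ C ⊆ A ∧ IsClusterC compat C ∧ Γ ∈ C := by
  rw [clSet, Finset.mem_filter, Finset.mem_powerset]

set_option maxHeartbeats 1000000 in
lemma inner_bound {compat : Ctr → Ctr → Prop}
    (hsym : ∀ Γ Γ', compat Γ Γ' → compat Γ' Γ)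
    (A : Finset Ctr) (Γ : Ctr)
    (q : Ctr → ℝ) (hq0 : ∀ Γ', 0 ≤ q Γ') :
    ∀ N' : Finset Ctr,
      N' ⊆ (A.erase Γ).filter (fun Γ' => ¬ compat Γ' Γ) →
      (∑ C ∈ goodSet compat A Γ ((A.erase Γ).filter (fun Γ' => ¬ compat Γ' Γ)) N',
          ∏ Γ' ∈ C, q Γ')
        ≤ q Γ * ∏ Γ₁ ∈ N', (1 + ∑ C ∈ clSet compat (A.erase Γ) Γ₁, ∏ Γ' ∈ C, q Γ') := by
  classical
  set N := (A.erase Γ).filter (fun Γ' => ¬ compat Γ' Γ) with hNdef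
  have hmeet : ∀ C ⊆ A, IsClusterC compat C → Γ ∈ C →
      ∀ a ∈ C.erase Γ, (ccomp compat (C.erase Γ) a ∩ N).Nonempty := by
    intro C hCA hcl hΓC a ha
    obtain ⟨d, hd, hdc⟩ := ccomp_meets hsym hcl hΓC ha
    refine ⟨d, Finset.mem_inter.mpr ⟨hd, ?_⟩⟩
    rw [hNdef, Finset.mem_filter]
    have hdE : d ∈ C.erase Γ := ccomp_subset _ _ hd
    rw [Finset.mem_erase] at hdE
    exact ⟨Finset.mem_erase.mpr ⟨hdE.1, hCA hdE.2⟩, hdc⟩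
  intro N'
  induction N' using Finset.induction_on with
  | empty =>
    intro _
    rw [Finset.prod_empty, mul_one]
    have hsub : goodSet compat A Γ N ∅ ⊆ {({Γ} : Finset Ctr)} := by
      intro C hC
      obtain ⟨hCA, hcl, hΓC, hcond⟩ := mem_goodSet.mp hC
      rw [Finset.mem_singleton]
      by_contra hne
      have hce : (C.erase Γ).Nonempty := by
        rcases Finset.eq_empty_or_nonempty (C.erase Γ) with he | hne'
        · exfalso
          apply hne
          apply Finset.Subset.antisymm
          · intro x hx
            rcases eq_or_ne x Γ with rfl | hxne
            · exact Finset.mem_singleton_self _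
            · exact absurd (Finset.mem_erase.mpr ⟨hxne, hx⟩)
                (by rw [he]; exact Finset.notMem_empty x)
          · rw [Finset.singleton_subset_iff]; exact hΓC
        · exact hne'
      obtain ⟨a, ha⟩ := hce
      exact absurd (hcond a ha) (Finset.notMem_empty _)
    calc ∑ C ∈ goodSet compat A Γ N ∅, ∏ Γ' ∈ C, q Γ'
        ≤ ∑ C ∈ {({Γ} : Finset Ctr)}, ∏ Γ' ∈ C, q Γ' :=
          Finset.sum_le_sum_of_subset_of_nonneg hsub
            (fun C _ _ => Finset.prod_nonneg fun x _ => hq0 x)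
    _ = q Γ := by rw [Finset.sum_singleton, Finset.prod_singleton]
  | @insert Γ₁ N'' hΓ₁ ihN =>
    intro hN'
    have hN'' : N'' ⊆ N := (Finset.subset_insert _ _).trans hN'
    set D1 : Finset Ctr → Finset Ctr := fun C =>
      (C.erase Γ).filter (fun a => pickF (ccomp compat (C.erase Γ) a ∩ N) = Γ₁)
      with hD1def
    have hD1subE : ∀ C, D1 C ⊆ C.erase Γ := fun C => Finset.filter_subset _ _
    have hD1subC : ∀ C, D1 C ⊆ C := fun C => (hD1subE C).trans (Finset.erase_subset _ _)
    have hΓnD1 : ∀ C, Γ ∉ D1 C := fun C h => (Finset.mem_erase.mp (hD1subE C h)).1 rfl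
    set σ : Finset Ctr → Finset Ctr × Finset Ctr := fun C => (C \ D1 C, D1 C) with hσdef
    set CS1 := clSet compat (A.erase Γ) Γ₁ with hCS1def
    set T := (goodSet compat A Γ N N'') ×ˢ (insert (∅ : Finset Ctr) CS1) with hTdef
    have hkey : ∀ C ∈ goodSet compat A Γ N (insert Γ₁ N''), σ C ∈ T ∧ (C \ D1 C) ∪ D1 C = C := by
      intro C hC
      obtain ⟨hCA, hcl, hΓC, hcond⟩ := mem_goodSet.mp hC
      have hunion : (C \ D1 C) ∪ D1 C = C := Finset.sdiff_union_of_subset (hD1subC C)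
      by_cases hD1e : D1 C = ∅
      · refine ⟨?_, hunion⟩
        rw [hTdef, Finset.mem_product]
        constructor
        · show C \ D1 C ∈ goodSet compat A Γ N N''
          rw [hD1e, Finset.sdiff_empty]
          rw [mem_goodSet]
          refine ⟨hCA, hcl, hΓC, ?_⟩
          intro a ha
          rcases Finset.mem_insert.mp (hcond a ha) with heq | h2
          · exfalso
            have : a ∈ D1 C := by
              rw [hD1def]; exact Finset.mem_filter.mpr ⟨ha, heq⟩
            rw [hD1e] at this
            exact absurd this (Finset.notMem_empty _)
          · exact h2
        · show D1 C ∈ insert ∅ CS1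
          rw [hD1e]; exact Finset.mem_insert_self _ _
      · obtain ⟨a₀, ha₀⟩ := Finset.nonempty_of_ne_empty hD1e
        have ha₀E : a₀ ∈ C.erase Γ := (Finset.mem_filter.mp ha₀).1
        have hrep₀ : pickF (ccomp compat (C.erase Γ) a₀ ∩ N) = Γ₁ :=
          (Finset.mem_filter.mp ha₀).2
        have hΓ₁mem : Γ₁ ∈ ccomp compat (C.erase Γ) a₀ ∩ N := by
          rw [← hrep₀]; exact pickF_mem (hmeet C hCA hcl hΓC a₀ ha₀E)
        have hΓ₁cc : Γ₁ ∈ ccomp compat (C.erase Γ) a₀ := (Finset.mem_inter.mp hΓ₁mem).1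
        have hΓ₁E : Γ₁ ∈ C.erase Γ := ccomp_subset _ _ hΓ₁cc
        have hccEq : ccomp compat (C.erase Γ) a₀ = ccomp compat (C.erase Γ) Γ₁ :=
          ccomp_eq hsym ha₀E hΓ₁cc
        have hD1eq : D1 C = ccomp compat (C.erase Γ) Γ₁ := by
          ext b
          rw [hD1def]
          simp only [Finset.mem_filter]
          constructor
          · rintro ⟨hbE, hrepb⟩
            have hΓ₁b : Γ₁ ∈ ccomp compat (C.erase Γ) b := by
              have hpm := pickF_mem (hmeet C hCA hcl hΓC b hbE)
              rw [hrepb] at hpm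
              exact (Finset.mem_inter.mp hpm).1
            have heq2 : ccomp compat (C.erase Γ) b = ccomp compat (C.erase Γ) Γ₁ :=
              ccomp_eq hsym hbE hΓ₁b
            rw [← heq2]
            exact mem_ccomp_self hbE
          · intro hb
            have hbE : b ∈ C.erase Γ := ccomp_subset _ _ hb
            have heq2 : ccomp compat (C.erase Γ) Γ₁ = ccomp compat (C.erase Γ) b :=
              ccomp_eq hsym hΓ₁E hb
            refine ⟨hbE, ?_⟩
            rw [← heq2, ← hccEq]
            exact hrep₀
        have hD1cl : IsClusterC compat (D1 C) := by
          rw [hD1eq]; exact ccomp_cluster hsym hΓ₁E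
        have hΓ₁D1 : Γ₁ ∈ D1 C := by
          rw [hD1eq]; exact mem_ccomp_self hΓ₁E
        have hC0cl : IsClusterC compat (C \ D1 C) := by
          refine ⟨⟨Γ, Finset.mem_sdiff.mpr ⟨hΓC, hΓnD1 C⟩⟩, ?_⟩
          rintro ⟨C₁, C₂, hne₁, hne₂, hdis, hcov, hcross⟩
          have build : ∀ (B₁ B₂ : Finset Ctr), B₂.Nonempty → Disjoint B₁ B₂ →
              (∀ x, x ∈ C \ D1 C ↔ (x ∈ B₁ ∨ x ∈ B₂)) →
              (∀ x ∈ B₁, ∀ y ∈ B₂, compat x y) → Γ ∈ B₁ → False := by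
            intro B₁ B₂ hne₂' hdis' hcov' hcross' hΓB₁
            apply hcl.2
            refine ⟨B₁ ∪ D1 C, B₂, ⟨Γ, Finset.mem_union_left _ hΓB₁⟩, hne₂', ?_, ?_, ?_⟩
            · rw [Finset.disjoint_union_left]
              refine ⟨hdis', ?_⟩
              rw [Finset.disjoint_left]
              intro x hxD hxB₂
              have hx : x ∈ C \ D1 C := (hcov' x).mpr (Or.inr hxB₂)
              exact (Finset.mem_sdiff.mp hx).2 hxD
            · intro x
              constructor
              · intro hx
                by_cases hxD : x ∈ D1 C
                · exact Or.inl (Finset.mem_union_right _ hxD)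
                · rcases (hcov' x).mp (Finset.mem_sdiff.mpr ⟨hx, hxD⟩) with h | h
                  · exact Or.inl (Finset.mem_union_left _ h)
                  · exact Or.inr h
              · rintro (hx | hx)
                · rcases Finset.mem_union.mp hx with h | h
                  · exact (Finset.mem_sdiff.mp ((hcov' x).mpr (Or.inl h))).1
                  · exact hD1subC C h
                · exact (Finset.mem_sdiff.mp ((hcov' x).mpr (Or.inr hx))).1
            · intro x hx y hy
              rcases Finset.mem_union.mp hx with h | h
              · exact hcross' x h y hy
              · by_contra hnc
                have hyC : y ∈ C \ D1 C := (hcov' y).mpr (Or.inr hy)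
                have hyE : y ∈ C.erase Γ := by
                  rw [Finset.mem_erase]
                  refine ⟨?_, (Finset.mem_sdiff.mp hyC).1⟩
                  intro heq
                  subst heq
                  exact Finset.disjoint_left.mp hdis' hΓB₁ hy
                have hxcc : x ∈ ccomp compat (C.erase Γ) Γ₁ := by
                  rw [← hD1eq]; exact h
                have hycc : y ∈ ccomp compat (C.erase Γ) Γ₁ :=
                  ccomp_extend hxcc hyE hnc
                rw [← hD1eq] at hycc
                exact (Finset.mem_sdiff.mp hyC).2 hycc
          rcases (hcov Γ).mp (Finset.mem_sdiff.mpr ⟨hΓC, hΓnD1 C⟩) with hΓ1 | hΓ2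
          · exact build C₁ C₂ hne₂ hdis hcov hcross hΓ1
          · exact build C₂ C₁ hne₁ hdis.symm (fun x => by rw [hcov x]; tauto)
              (fun x hx y hy => hsym _ _ (hcross y hy x hx)) hΓ2
        have herase : (C \ D1 C).erase Γ = (C.erase Γ) \ D1 C := by
          ext x
          simp only [Finset.mem_erase, Finset.mem_sdiff]
          tauto
        have hC0good : C \ D1 C ∈ goodSet compat A Γ N N'' := by
          rw [mem_goodSet]
          refine ⟨Finset.sdiff_subset.trans hCA, hC0cl,
            Finset.mem_sdiff.mpr ⟨hΓC, hΓnD1 C⟩, ?_⟩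
          intro a ha
          rw [herase] at ha
          have haE : a ∈ C.erase Γ := (Finset.mem_sdiff.mp ha).1
          have hanD : a ∉ D1 C := (Finset.mem_sdiff.mp ha).2
          have hdisj : ∀ x ∈ ccomp compat (C.erase Γ) a, x ∉ D1 C := by
            intro x hx hxD
            have h1 : ccomp compat (C.erase Γ) a = ccomp compat (C.erase Γ) x :=
              ccomp_eq hsym haE hx
            have hxcc : x ∈ ccomp compat (C.erase Γ) Γ₁ := by rw [← hD1eq]; exact hxD
            have h2 : ccomp compat (C.erase Γ) Γ₁ = ccomp compat (C.erase Γ) x :=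
              ccomp_eq hsym hΓ₁E hxcc
            apply hanD
            rw [hD1eq, h2, ← h1]
            exact mem_ccomp_self haE
          have hstable : ccomp compat ((C.erase Γ) \ D1 C) a = ccomp compat (C.erase Γ) a :=
            ccomp_stable haE hdisj
          rw [herase, hstable]
          rcases Finset.mem_insert.mp (hcond a haE) with heq | h2
          · exfalso
            apply hanD
            rw [hD1def]
            exact Finset.mem_filter.mpr ⟨haE, heq⟩
          · exact h2
        have hD1mem : D1 C ∈ CS1 := by
          rw [hCS1def, mem_clSet]
          refine ⟨?_, hD1cl, hΓ₁D1⟩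
          intro x hx
          have hxE := hD1subE C hx
          rw [Finset.mem_erase] at hxE ⊢
          exact ⟨hxE.1, hCA hxE.2⟩
        refine ⟨?_, hunion⟩
        rw [hTdef, Finset.mem_product]
        exact ⟨hC0good, Finset.mem_insert_of_mem hD1mem⟩
    have hinj : ∀ x ∈ goodSet compat A Γ N (insert Γ₁ N''),
        ∀ y ∈ goodSet compat A Γ N (insert Γ₁ N''), σ x = σ y → x = y := by
      intro x hx y hy hxy
      have h1 := (hkey x hx).2
      have h2 := (hkey y hy).2
      have e1 : x \ D1 x = y \ D1 y := congrArg Prod.fst hxy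
      have e2 : D1 x = D1 y := congrArg Prod.snd hxy
      rw [← h1, ← h2, e1, e2]
    have hemp : (∅ : Finset Ctr) ∉ CS1 := by
      intro h
      rw [hCS1def, mem_clSet] at h
      exact Finset.not_nonempty_empty h.2.1.1
    calc ∑ C ∈ goodSet compat A Γ N (insert Γ₁ N''), ∏ Γ' ∈ C, q Γ'
        = ∑ C ∈ goodSet compat A Γ N (insert Γ₁ N''),
            ((∏ Γ' ∈ (σ C).1, q Γ') * (∏ Γ' ∈ (σ C).2, q Γ')) := by
          refine Finset.sum_congr rfl fun C hC => ?_
          rw [hσdef]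
          exact (Finset.prod_sdiff (hD1subC C)).symm
    _ = ∑ p ∈ (goodSet compat A Γ N (insert Γ₁ N'')).image σ,
            ((∏ Γ' ∈ p.1, q Γ') * (∏ Γ' ∈ p.2, q Γ')) := by
          rw [Finset.sum_image hinj]
    _ ≤ ∑ p ∈ T, ((∏ Γ' ∈ p.1, q Γ') * (∏ Γ' ∈ p.2, q Γ')) := by
          refine Finset.sum_le_sum_of_subset_of_nonneg ?_ ?_
          · intro p hp
            obtain ⟨C, hC, rfl⟩ := Finset.mem_image.mp hp
            exact (hkey C hC).1
          · intro p _ _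
            exact mul_nonneg (Finset.prod_nonneg fun x _ => hq0 x)
              (Finset.prod_nonneg fun x _ => hq0 x)
    _ = (∑ C0 ∈ goodSet compat A Γ N N'', ∏ Γ' ∈ C0, q Γ')
          * (∑ D ∈ insert (∅ : Finset Ctr) CS1, ∏ Γ' ∈ D, q Γ') := by
          rw [hTdef,
            Finset.sum_product' (f := fun C0 D => (∏ Γ' ∈ C0, q Γ') * (∏ Γ' ∈ D, q Γ')),
            ← Finset.sum_mul_sum]
    _ = (∑ C0 ∈ goodSet compat A Γ N N'', ∏ Γ' ∈ C0, q Γ')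
          * (1 + ∑ D ∈ CS1, ∏ Γ' ∈ D, q Γ') := by
          rw [Finset.sum_insert hemp, Finset.prod_empty]
    _ ≤ (q Γ * ∏ Γ₂ ∈ N'', (1 + ∑ C ∈ clSet compat (A.erase Γ) Γ₂, ∏ Γ' ∈ C, q Γ'))
          * (1 + ∑ D ∈ CS1, ∏ Γ' ∈ D, q Γ') := by
          refine mul_le_mul_of_nonneg_right (ihN hN'') ?_
          have : 0 ≤ ∑ D ∈ CS1, ∏ Γ' ∈ D, q Γ' :=
            Finset.sum_nonneg fun D _ => Finset.prod_nonneg fun x _ => hq0 x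
          linarith
    _ = q Γ * ∏ Γ₂ ∈ insert Γ₁ N'',
          (1 + ∑ C ∈ clSet compat (A.erase Γ) Γ₂, ∏ Γ' ∈ C, q Γ') := by
          rw [Finset.prod_insert hΓ₁, hCS1def]
          ring
lemma count_bound {compat : Ctr → Ctr → Prop}
    (hsym : ∀ Γ Γ', compat Γ Γ' → compat Γ' Γ)
    (P : Finset Ctr) (q : Ctr → ℝ)
    (hq0 : ∀ Γ', 0 ≤ q Γ')
    (hsum : ∀ Γ ∈ P, ∑ Γ' ∈ P.filter (fun Γ' => ¬ compat Γ' Γ), q Γ' * Real.exp Γ'.len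
      ≤ (Γ.len : ℝ)) :
    ∀ A ⊆ P, ∀ Γ ∈ A,
      (∑ C ∈ clSet compat A Γ, ∏ Γ' ∈ C, q Γ') ≤ q Γ * Real.exp Γ.len := by
  suffices H : ∀ m : ℕ, ∀ A ⊆ P, A.card ≤ m → ∀ Γ ∈ A,
      (∑ C ∈ clSet compat A Γ, ∏ Γ' ∈ C, q Γ') ≤ q Γ * Real.exp Γ.len by
    intro A hA Γ hΓ; exact H A.card A hA le_rfl Γ hΓ
  intro m
  induction m with
  | zero =>
    intro A hA hc Γ hΓ
    rw [Nat.le_zero, Finset.card_eq_zero] at hc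
    subst hc
    exact absurd hΓ (Finset.notMem_empty _)
  | succ m ih =>
    intro A hAP hAc Γ hΓA
    set N := (A.erase Γ).filter (fun Γ' => ¬ compat Γ' Γ) with hNdef
    have hsub : clSet compat A Γ ⊆ goodSet compat A Γ N N := by
      intro C hC
      obtain ⟨hCA, hcl, hΓC⟩ := mem_clSet.mp hC
      rw [mem_goodSet]
      refine ⟨hCA, hcl, hΓC, ?_⟩
      intro a ha
      obtain ⟨d, hd, hdc⟩ := ccomp_meets hsym hcl hΓC ha
      have hdN : d ∈ N := by
        have hdE : d ∈ C.erase Γ := ccomp_subset _ _ hd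
        rw [Finset.mem_erase] at hdE
        rw [hNdef, Finset.mem_filter]
        exact ⟨Finset.mem_erase.mpr ⟨hdE.1, hCA hdE.2⟩, hdc⟩
      have hne : (ccomp compat (C.erase Γ) a ∩ N).Nonempty :=
        ⟨d, Finset.mem_inter.mpr ⟨hd, hdN⟩⟩
      exact (Finset.mem_inter.mp (pickF_mem hne)).2
    have h1 : (∑ C ∈ clSet compat A Γ, ∏ Γ' ∈ C, q Γ')
        ≤ ∑ C ∈ goodSet compat A Γ N N, ∏ Γ' ∈ C, q Γ' :=
      Finset.sum_le_sum_of_subset_of_nonneg hsub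
        (fun C _ _ => Finset.prod_nonneg fun x _ => hq0 x)
    have h2 := inner_bound hsym A Γ q hq0 N (by rw [hNdef])
    have h3 : ∀ Γ₁ ∈ N, (∑ C ∈ clSet compat (A.erase Γ) Γ₁, ∏ Γ' ∈ C, q Γ')
        ≤ q Γ₁ * Real.exp Γ₁.len := by
      intro Γ₁ hΓ₁
      rw [hNdef, Finset.mem_filter] at hΓ₁
      refine ih (A.erase Γ) ((Finset.erase_subset _ _).trans hAP) ?_ Γ₁ hΓ₁.1
      have h4 := Finset.card_erase_of_mem hΓA
      have h5 : 1 ≤ A.card := Finset.card_pos.mpr ⟨Γ, hΓA⟩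
      omega
    have h5 : ∏ Γ₁ ∈ N, (1 + ∑ C ∈ clSet compat (A.erase Γ) Γ₁, ∏ Γ' ∈ C, q Γ')
        ≤ Real.exp (∑ Γ₁ ∈ N, q Γ₁ * Real.exp Γ₁.len) := by
      rw [Real.exp_sum]
      refine Finset.prod_le_prod ?_ ?_
      · intro i _
        have : 0 ≤ ∑ C ∈ clSet compat (A.erase Γ) i, ∏ Γ' ∈ C, q Γ' :=
          Finset.sum_nonneg fun C _ => Finset.prod_nonneg fun x _ => hq0 x
        linarith
      · intro i hi
        calc 1 + ∑ C ∈ clSet compat (A.erase Γ) i, ∏ Γ' ∈ C, q Γ'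
            ≤ 1 + q i * Real.exp i.len := by linarith [h3 i hi]
        _ ≤ Real.exp (q i * Real.exp i.len) := by
            have := Real.add_one_le_exp (q i * Real.exp i.len); linarith
    have h6 : ∑ Γ₁ ∈ N, q Γ₁ * Real.exp Γ₁.len ≤ (Γ.len : ℝ) := by
      refine le_trans (Finset.sum_le_sum_of_subset_of_nonneg ?_ ?_) (hsum Γ (hAP hΓA))
      · intro x hx
        rw [hNdef, Finset.mem_filter] at hx
        rw [Finset.mem_filter]
        exact ⟨hAP (Finset.mem_of_mem_erase hx.1), hx.2⟩
      · intro x _ _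
        exact mul_nonneg (hq0 x) (Real.exp_pos _).le
    calc (∑ C ∈ clSet compat A Γ, ∏ Γ' ∈ C, q Γ')
        ≤ ∑ C ∈ goodSet compat A Γ N N, ∏ Γ' ∈ C, q Γ' := h1
    _ ≤ q Γ * ∏ Γ₁ ∈ N, (1 + ∑ C ∈ clSet compat (A.erase Γ) Γ₁, ∏ Γ' ∈ C, q Γ') := h2
    _ ≤ q Γ * Real.exp (∑ Γ₁ ∈ N, q Γ₁ * Real.exp Γ₁.len) :=
        mul_le_mul_of_nonneg_left h5 (hq0 Γ)
    _ ≤ q Γ * Real.exp (Γ.len : ℝ) :=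
        mul_le_mul_of_nonneg_left (Real.exp_le_exp.mpr h6) (hq0 Γ)

lemma exp_two_gt : (7:ℝ) < Real.exp 2 := by
  have h := Real.exp_one_gt_d9
  have h2 : Real.exp 2 = Real.exp 1 * Real.exp 1 := by
    rw [← Real.exp_add]; norm_num
  nlinarith

lemma esum (c₁ : ℝ) (S : Finset Ctr) (m : ℝ)
    (hcard : ∀ n : ℕ, ((S.filter (fun Γ => Γ.len = n)).card : ℝ) ≤ m * Real.exp (c₁ * n))
    (hlen : ∀ Γ ∈ S, 1 ≤ Γ.len) :
    ∑ Γ ∈ S, Real.exp (-(c₁+2) * (Γ.len:ℝ)) ≤ m / 6 := by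
  have hm : 0 ≤ m := by
    have h := hcard 0
    rw [Nat.cast_zero, mul_zero, Real.exp_zero, mul_one] at h
    exact le_trans (Nat.cast_nonneg _) h
  have hfib : ∑ Γ ∈ S, Real.exp (-(c₁+2) * (Γ.len:ℝ))
      = ∑ n ∈ S.image Ctr.len, ∑ Γ ∈ S.filter (fun Γ => Γ.len = n),
          Real.exp (-(c₁+2) * (Γ.len:ℝ)) :=
    (Finset.sum_fiberwise_of_maps_to (fun Γ hΓ => Finset.mem_image_of_mem Ctr.len hΓ) _).symm
  rw [hfib]
  have hinner : ∀ n ∈ S.image Ctr.len,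
      (∑ Γ ∈ S.filter (fun Γ => Γ.len = n), Real.exp (-(c₁+2) * (Γ.len:ℝ)))
      = ((S.filter (fun Γ => Γ.len = n)).card : ℝ) * Real.exp (-(c₁+2) * (n:ℝ)) := by
    intro n _
    rw [Finset.sum_congr rfl (fun Γ hΓ => by rw [(Finset.mem_filter.mp hΓ).2]),
      Finset.sum_const, nsmul_eq_mul]
  rw [Finset.sum_congr rfl hinner]
  set r := Real.exp (-2) with hrdef
  have hr0 : 0 < r := Real.exp_pos _
  have hr17 : r ≤ 1/7 := by
    have hmul : r * Real.exp 2 = 1 := by rw [hrdef, ← Real.exp_add]; norm_num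
    nlinarith [exp_two_gt, hr0]
  have hr1 : r < 1 := by nlinarith
  have h1r : 0 < 1 - r := by linarith
  have hterm : ∀ n ∈ S.image Ctr.len,
      ((S.filter (fun Γ => Γ.len = n)).card : ℝ) * Real.exp (-(c₁+2) * (n:ℝ))
      ≤ m * r^n := by
    intro n _
    have h1 := hcard n
    have h2 : Real.exp (c₁ * n) * Real.exp (-(c₁+2) * (n:ℝ)) = r^n := by
      rw [hrdef, ← Real.exp_add, ← Real.exp_nat_mul]
      congr 1
      ring
    calc ((S.filter (fun Γ => Γ.len = n)).card : ℝ) * Real.exp (-(c₁+2) * (n:ℝ))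
        ≤ m * Real.exp (c₁*n) * Real.exp (-(c₁+2) * (n:ℝ)) :=
          mul_le_mul_of_nonneg_right h1 (Real.exp_pos _).le
    _ = m * r^n := by rw [mul_assoc, h2]
  have hF : ∀ n ∈ S.image Ctr.len, 1 ≤ n := by
    intro n hn
    obtain ⟨Γ, hΓ, rfl⟩ := Finset.mem_image.mp hn
    exact hlen Γ hΓ
  have hgeo : ∑ n ∈ S.image Ctr.len, r^n ≤ r / (1-r) := by
    set M := (S.image Ctr.len).sup id with hM
    have hsubF : S.image Ctr.len ⊆ Finset.Icc 1 M := by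
      intro n hn
      rw [Finset.mem_Icc]
      exact ⟨hF n hn, Finset.le_sup (f := id) hn⟩
    calc ∑ n ∈ S.image Ctr.len, r^n ≤ ∑ n ∈ Finset.Icc 1 M, r^n :=
        Finset.sum_le_sum_of_subset_of_nonneg hsubF (fun n _ _ => (pow_pos hr0 n).le)
    _ = ∑ k ∈ Finset.range M, r^(1+k) := by
        rw [← Finset.Ico_add_one_right_eq_Icc, Finset.sum_Ico_eq_sum_range]
        simp
    _ = r * ∑ k ∈ Finset.range M, r^k := by
        rw [Finset.mul_sum]
        exact Finset.sum_congr rfl fun k _ => by rw [pow_add, pow_one]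
    _ ≤ r * (1-r)⁻¹ := by
        refine mul_le_mul_of_nonneg_left ?_ hr0.le
        rw [geom_sum_eq hr1.ne M]
        have hpM : 0 ≤ r ^ M := (pow_pos hr0 M).le
        have heq : (r^M - 1)/(r-1) = (1 - r^M)/(1-r) := by
          rw [← neg_div_neg_eq]; ring_nf
        rw [heq, inv_eq_one_div]
        exact (div_le_div_iff_of_pos_right h1r).mpr (by nlinarith)
    _ = r / (1-r) := by rw [div_eq_mul_inv]
  calc ∑ n ∈ S.image Ctr.len,
        ((S.filter (fun Γ => Γ.len = n)).card : ℝ) * Real.exp (-(c₁+2) * (n:ℝ))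
      ≤ ∑ n ∈ S.image Ctr.len, m * r^n := Finset.sum_le_sum hterm
  _ = m * ∑ n ∈ S.image Ctr.len, r^n := by rw [Finset.mul_sum]
  _ ≤ m * (r/(1-r)) := mul_le_mul_of_nonneg_left hgeo hm
  _ ≤ m / 6 := by
      have hfrac : r/(1-r) ≤ 1/6 := by
        rw [div_le_iff₀ h1r]; linarith
      calc m * (r/(1-r)) ≤ m * (1/6) := mul_le_mul_of_nonneg_left hfrac hm
      _ = m / 6 := by ring
set_option maxHeartbeats 2000000 in

/-- there are constants `β₄, c₂ > 0` independent of `l₀` (depending only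
on the entropy constant `c₁` of the contour ensemble) such that for every `β ≥ l₀β₄`,
every boundary condition `η` and every volume: for every dual site `x*`,
`Σ_{C ∈ 𝔠₀^η, x* ∈ C} |φ₀^η(C)|·exp[(2β/l₀ − c₂)|C|] ≤ 1`, the sum being over the
clusters of the polymer model of balanced contours containing `x*`.  Moreover
`φ₀^η(C)` depends only on the restriction of `η` to `dom(C)`. -/
theorem statement11 :
    ∀ c₁ : ℝ, 0 < c₁ → ∃ β₄ c₂ : ℝ, 0 < β₄ ∧ 0 < c₂ ∧
      ∀ l₀ : ℕ, 1 ≤ l₀ → ∀ β : ℝ, (l₀ : ℝ) * β₄ ≤ β →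
        ∀ (K : Finset Ctr) (compat : Ctr → Ctr → Prop),
          (∀ Γ Γ', compat Γ Γ' → compat Γ' Γ) →
          (∀ Γ, ¬ compat Γ Γ) →
          (∀ Γ ∈ K, 1 ≤ Γ.len) →
          (∀ Γ ∈ K, ∀ n : ℕ,
            ((K.filter (fun Γ' => ¬ compat Γ' Γ ∧ Γ'.len = n)).card : ℝ)
              ≤ (Γ.len : ℝ) * Real.exp (c₁ * n)) →
          (∀ x : ℤ × ℤ, ∀ n : ℕ,
            ((K.filter (fun Γ' => x ∈ Γ'.sites ∧ Γ'.len = n)).card : ℝ)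
              ≤ Real.exp (c₁ * n)) →
          ∀ η : ℤ × ℤ → ℝ, (∀ x, η x = 1 ∨ η x = -1) →
            (∀ x : ℤ × ℤ,
              ∑ C ∈ (K.filter (CtrBalanced l₀ η)).powerset.filter
                  (fun C => IsClusterC compat C ∧ ∃ Γ ∈ C, x ∈ Γ.sites),
                |phi β η compat C| * Real.exp ((2 * β / (l₀ : ℝ) - c₂) * tlen C)
              ≤ 1) ∧
            (∀ C : Finset Ctr, ∀ η' : ℤ × ℤ → ℝ,
              (∀ x ∈ C.biUnion Ctr.minusB, η x = η' x) →
              phi β η compat C = phi β η' compat C) := by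
  intro c₁ hc₁
  refine ⟨c₁ + 4, 2*c₁ + 8, by linarith, by linarith, ?_⟩
  intro l₀ hl₀ β hβ K compat hsym hirr hlen hent hsite η hη
  have hl₀R : (1:ℝ) ≤ (l₀:ℝ) := by exact_mod_cast hl₀
  have hl₀pos : (0:ℝ) < (l₀:ℝ) := by linarith
  have hβpos : 0 < β := by nlinarith
  have hs : 2*c₁ + 8 ≤ 2*β/(l₀:ℝ) := by
    rw [le_div_iff₀ hl₀pos]
    nlinarith
  set P := K.filter (CtrBalanced l₀ η) with hPdef
  have hPK : P ⊆ K := Finset.filter_subset _ _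
  set u : Ctr → ℝ := fun Γ => Real.exp (-(c₁+3) * (Γ.len:ℝ)) with hudef
  have hueq : ∀ Γ : Ctr, u Γ = Real.exp (-(c₁+3) * (Γ.len:ℝ)) := fun _ => rfl
  have hupos : ∀ Γ ∈ P, 0 < u Γ := fun Γ _ => Real.exp_pos _
  have hn1 : ∀ Γ ∈ P, (1:ℝ) ≤ (Γ.len:ℝ) := fun Γ hΓ => by
    exact_mod_cast hlen Γ (hPK hΓ)
  have huexp : ∀ Γ : Ctr, u Γ * Real.exp Γ.len = Real.exp (-(c₁+2) * (Γ.len:ℝ)) := by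
    intro Γ
    rw [hueq Γ, ← Real.exp_add]
    congr 1
    ring
  have hexp2 : Real.exp (-2:ℝ) ≤ 1/2 := by
    have hmul : Real.exp (-2:ℝ) * Real.exp 2 = 1 := by rw [← Real.exp_add]; norm_num
    nlinarith [exp_two_gt, Real.exp_pos (-2:ℝ)]
  have hr : ∀ Γ ∈ P, u Γ * Real.exp Γ.len ≤ 1/2 := by
    intro Γ hΓ
    rw [huexp Γ]
    refine le_trans (Real.exp_le_exp.mpr ?_) hexp2
    nlinarith [hn1 Γ hΓ]
  have hρle : ∀ Γ ∈ P, rho β η Γ ≤ Real.exp (-(2*β/(l₀:ℝ)) * (Γ.len:ℝ)) := by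
    intro Γ hΓ
    rw [hPdef, Finset.mem_filter] at hΓ
    have hbal : -(1 - 1/(l₀:ℝ)) * Γ.len ≤ ∑ x ∈ Γ.minusB, η x := hΓ.2
    rw [rho]
    apply Real.exp_le_exp.mpr
    have key : (Γ.len:ℝ)/(l₀:ℝ) ≤ (Γ.len:ℝ) + ∑ x ∈ Γ.minusB, η x := by
      have h2 : -(1 - 1/(l₀:ℝ)) * (Γ.len:ℝ) = (Γ.len:ℝ)/(l₀:ℝ) - (Γ.len:ℝ) := by
        field_simp <;> ring
      linarith
    have h3 : (-2*β) * ((Γ.len:ℝ) + ∑ x ∈ Γ.minusB, η x) ≤ (-2*β) * ((Γ.len:ℝ)/(l₀:ℝ)) := by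
      apply mul_le_mul_of_nonpos_left key (by linarith)
    refine h3.trans (le_of_eq ?_)
    field_simp <;> ring
  have hρu : ∀ Γ ∈ P, rho β η Γ < u Γ := by
    intro Γ hΓ
    refine lt_of_le_of_lt (hρle Γ hΓ) ?_
    rw [hueq Γ]
    apply Real.exp_lt_exp.mpr
    nlinarith [hn1 Γ hΓ]
  have hM0 : ∀ Γ ∈ P, rho β η Γ * Real.exp Γ.len ≤ 1/2 := by
    intro Γ hΓ
    have h1 : rho β η Γ * Real.exp Γ.len
        ≤ Real.exp (-(2*β/(l₀:ℝ)) * (Γ.len:ℝ)) * Real.exp Γ.len :=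
      mul_le_mul_of_nonneg_right (hρle Γ hΓ) (Real.exp_pos _).le
    rw [← Real.exp_add] at h1
    refine h1.trans (le_trans (Real.exp_le_exp.mpr ?_) hexp2)
    nlinarith [hn1 Γ hΓ]
  have hesum : ∀ Γ ∈ P, ∑ Γ' ∈ P.filter (fun Γ' => ¬ compat Γ' Γ),
      u Γ' * Real.exp Γ'.len ≤ (Γ.len:ℝ)/6 := by
    intro Γ hΓ
    have hrw : ∑ Γ' ∈ P.filter (fun Γ' => ¬ compat Γ' Γ), u Γ' * Real.exp Γ'.len
        = ∑ Γ' ∈ P.filter (fun Γ' => ¬ compat Γ' Γ), Real.exp (-(c₁+2) * (Γ'.len:ℝ)) :=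
      Finset.sum_congr rfl fun Γ' _ => huexp Γ'
    rw [hrw]
    refine esum c₁ _ (Γ.len:ℝ) ?_ ?_
    · intro n
      refine le_trans ?_ (hent Γ (hPK hΓ) n)
      apply Nat.cast_le.mpr
      apply Finset.card_le_card
      intro y hy
      simp only [Finset.mem_filter] at hy ⊢
      exact ⟨hPK hy.1.1, hy.1.2, hy.2⟩
    · intro Γ' hΓ'
      exact hlen Γ' (hPK (Finset.mem_filter.mp hΓ').1)
  have hnb : ∀ Γ ∈ P, ∑ Γ' ∈ P.filter (fun Γ' => ¬ compat Γ' Γ),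
      u Γ' * Real.exp Γ'.len ≤ (Γ.len:ℝ)/2 := by
    intro Γ hΓ
    refine (hesum Γ hΓ).trans ?_
    have := hn1 Γ hΓ
    linarith
  have hsumc : ∀ Γ ∈ P, ∑ Γ' ∈ P.filter (fun Γ' => ¬ compat Γ' Γ),
      u Γ' * Real.exp Γ'.len ≤ (Γ.len:ℝ) := by
    intro Γ hΓ
    refine (hesum Γ hΓ).trans ?_
    have := hn1 Γ hΓ
    linarith
  have hu0 : ∀ Γ' : Ctr, 0 ≤ u Γ' := fun Γ' => (Real.exp_pos _).le
  constructor
  · -- main bound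
    intro x
    set Sx := P.filter (fun Γ => x ∈ Γ.sites) with hSxdef
    set fs := P.powerset.filter
      (fun C => IsClusterC compat C ∧ ∃ Γ ∈ C, x ∈ Γ.sites) with hfsdef
    have hF1 : ∀ Γ ∈ P, 2*(rho β η Γ * Real.exp Γ.len)
        * Real.exp ((2*β/(l₀:ℝ) - (2*c₁+8)) * (Γ.len:ℝ)) ≤ u Γ := by
      intro Γ hΓ
      have hn := hn1 Γ hΓ
      have h1 : 2*(rho β η Γ * Real.exp Γ.len)
            * Real.exp ((2*β/(l₀:ℝ) - (2*c₁+8)) * (Γ.len:ℝ))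
          ≤ 2*(Real.exp (-(2*β/(l₀:ℝ)) * (Γ.len:ℝ)) * Real.exp Γ.len)
            * Real.exp ((2*β/(l₀:ℝ) - (2*c₁+8)) * (Γ.len:ℝ)) := by
        refine mul_le_mul_of_nonneg_right ?_ (Real.exp_pos _).le
        refine mul_le_mul_of_nonneg_left ?_ (by norm_num)
        exact mul_le_mul_of_nonneg_right (hρle Γ hΓ) (Real.exp_pos _).le
      refine h1.trans ?_
      have h4 : 2*(Real.exp (-(2*β/(l₀:ℝ)) * (Γ.len:ℝ)) * Real.exp Γ.len)
            * Real.exp ((2*β/(l₀:ℝ) - (2*c₁+8)) * (Γ.len:ℝ))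
          = 2 * Real.exp (-(2*c₁+7) * (Γ.len:ℝ)) := by
        rw [← Real.exp_add, mul_assoc, ← Real.exp_add]
        congr 1
        rw [Real.exp_eq_exp]
        ring
      rw [h4, hueq Γ]
      have h5 : Real.exp (-(c₁+3) * (Γ.len:ℝ))
          = Real.exp ((c₁+4) * (Γ.len:ℝ)) * Real.exp (-(2*c₁+7) * (Γ.len:ℝ)) := by
        rw [← Real.exp_add]
        congr 1
        ring
      rw [h5]
      apply mul_le_mul_of_nonneg_right ?_ (Real.exp_pos _).le
      have h6 := Real.add_one_le_exp ((c₁+4) * (Γ.len:ℝ))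
      nlinarith
    have hF2 : ∀ Γ ∈ P, (4 * rho β η Γ / u Γ)
        * Real.exp ((2*β/(l₀:ℝ) - (2*c₁+8)) * (Γ.len:ℝ)) ≤ u Γ := by
      intro Γ hΓ
      have hn := hn1 Γ hΓ
      have huinv : (u Γ)⁻¹ = Real.exp ((c₁+3) * (Γ.len:ℝ)) := by
        rw [hueq Γ]
        rw [show -(c₁+3)*(Γ.len:ℝ) = -((c₁+3)*(Γ.len:ℝ)) by ring, Real.exp_neg, inv_inv]
      have h1 : 4 * rho β η Γ / u Γ ≤ 4 * Real.exp (-(2*β/(l₀:ℝ)) * (Γ.len:ℝ))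
          * Real.exp ((c₁+3) * (Γ.len:ℝ)) := by
        rw [div_eq_mul_inv, huinv]
        have := hρle Γ hΓ
        have h2 := Real.exp_pos ((c₁+3) * (Γ.len:ℝ))
        nlinarith [rho_pos β η Γ]
      have h3 : (4 * rho β η Γ / u Γ)
            * Real.exp ((2*β/(l₀:ℝ) - (2*c₁+8)) * (Γ.len:ℝ))
          ≤ (4 * Real.exp (-(2*β/(l₀:ℝ)) * (Γ.len:ℝ)) * Real.exp ((c₁+3) * (Γ.len:ℝ)))
            * Real.exp ((2*β/(l₀:ℝ) - (2*c₁+8)) * (Γ.len:ℝ)) :=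
        mul_le_mul_of_nonneg_right h1 (Real.exp_pos _).le
      refine h3.trans ?_
      have h4 : (4 * Real.exp (-(2*β/(l₀:ℝ)) * (Γ.len:ℝ)) * Real.exp ((c₁+3) * (Γ.len:ℝ)))
            * Real.exp ((2*β/(l₀:ℝ) - (2*c₁+8)) * (Γ.len:ℝ))
          = 4 * Real.exp (-(c₁+5) * (Γ.len:ℝ)) := by
        rw [mul_assoc, ← Real.exp_add, mul_assoc, ← Real.exp_add]
        congr 1
        rw [Real.exp_eq_exp]
        ring
      rw [h4, hueq Γ]
      have h5 : Real.exp (-(c₁+3) * (Γ.len:ℝ))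
          = Real.exp (2 * (Γ.len:ℝ)) * Real.exp (-(c₁+5) * (Γ.len:ℝ)) := by
        rw [← Real.exp_add]
        congr 1
        ring
      rw [h5]
      apply mul_le_mul_of_nonneg_right ?_ (Real.exp_pos _).le
      have h6 : Real.exp (2:ℝ) ≤ Real.exp (2 * (Γ.len:ℝ)) := by
        apply Real.exp_le_exp.mpr
        nlinarith
      nlinarith [exp_two_gt]
    have hcluster : ∀ C ∈ fs, |phi β η compat C|
        * Real.exp ((2*β/(l₀:ℝ) - (2*c₁+8)) * tlen C) ≤ ∏ Γ ∈ C, u Γ := by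
      intro C hC
      rw [hfsdef, Finset.mem_filter, Finset.mem_powerset] at hC
      obtain ⟨hCA, hcl, -⟩ := hC
      obtain ⟨Γ₀, hΓ₀⟩ := hcl.1
      have hphi := phi_cluster_bound hsym P u β η hupos hr hnb hρu hM0 hCA hΓ₀
      have hexpsplit : Real.exp ((2*β/(l₀:ℝ) - (2*c₁+8)) * tlen C)
          = ∏ Γ ∈ C, Real.exp ((2*β/(l₀:ℝ) - (2*c₁+8)) * (Γ.len:ℝ)) := by
        rw [tlen, Finset.mul_sum, Real.exp_sum]
      calc |phi β η compat C| * Real.exp ((2*β/(l₀:ℝ) - (2*c₁+8)) * tlen C)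
          ≤ (2 * (rho β η Γ₀ * Real.exp Γ₀.len)
              * ∏ Γ ∈ C.erase Γ₀, (4 * rho β η Γ / u Γ))
            * Real.exp ((2*β/(l₀:ℝ) - (2*c₁+8)) * tlen C) :=
            mul_le_mul_of_nonneg_right hphi (Real.exp_pos _).le
      _ = (2*(rho β η Γ₀ * Real.exp Γ₀.len)
              * Real.exp ((2*β/(l₀:ℝ) - (2*c₁+8)) * (Γ₀.len:ℝ)))
            * ∏ Γ ∈ C.erase Γ₀, ((4 * rho β η Γ / u Γ)
              * Real.exp ((2*β/(l₀:ℝ) - (2*c₁+8)) * (Γ.len:ℝ))) := by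
            rw [hexpsplit,
              ← Finset.mul_prod_erase C
                (fun Γ => Real.exp ((2*β/(l₀:ℝ) - (2*c₁+8)) * (Γ.len:ℝ))) hΓ₀,
              Finset.prod_mul_distrib]
            ring
      _ ≤ u Γ₀ * ∏ Γ ∈ C.erase Γ₀, u Γ := by
            refine mul_le_mul (hF1 Γ₀ (hCA hΓ₀)) ?_ ?_ (hu0 Γ₀)
            · refine Finset.prod_le_prod ?_ ?_
              · intro Γ hΓ
                have hΓP := hCA (Finset.mem_of_mem_erase hΓ)
                exact mul_nonneg (div_nonneg (by nlinarith [rho_pos β η Γ])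
                  (hupos Γ hΓP).le) (Real.exp_pos _).le
              · intro Γ hΓ
                exact hF2 Γ (hCA (Finset.mem_of_mem_erase hΓ))
            · refine Finset.prod_nonneg fun Γ hΓ => ?_
              have hΓP := hCA (Finset.mem_of_mem_erase hΓ)
              exact mul_nonneg (div_nonneg (by nlinarith [rho_pos β η Γ])
                (hupos Γ hΓP).le) (Real.exp_pos _).le
      _ = ∏ Γ ∈ C, u Γ := Finset.mul_prod_erase C u hΓ₀
    have hstep1 : ∀ C ∈ fs, (∏ Γ ∈ C, u Γ)
        ≤ ∑ Γ ∈ Sx.filter (fun Γ => Γ ∈ C), ∏ Γ' ∈ C, u Γ' := by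
      intro C hC
      rw [hfsdef, Finset.mem_filter, Finset.mem_powerset] at hC
      obtain ⟨hCA, -, Γx, hΓxC, hΓxs⟩ := hC
      have hmem : Γx ∈ Sx.filter (fun Γ => Γ ∈ C) := by
        rw [Finset.mem_filter, hSxdef, Finset.mem_filter]
        exact ⟨⟨hCA hΓxC, hΓxs⟩, hΓxC⟩
      exact Finset.single_le_sum (f := fun _ => ∏ Γ' ∈ C, u Γ')
        (fun i _ => Finset.prod_nonneg fun Γ' _ => hu0 Γ') hmem
    have hswap : ∑ C ∈ fs, ∑ Γ ∈ Sx.filter (fun Γ => Γ ∈ C), (∏ Γ' ∈ C, u Γ')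
        = ∑ Γ ∈ Sx, ∑ C ∈ fs.filter (fun C => Γ ∈ C), (∏ Γ' ∈ C, u Γ') := by
      simp_rw [Finset.sum_filter]
      rw [Finset.sum_comm]
    have hstep3 : ∀ Γ ∈ Sx, ∑ C ∈ fs.filter (fun C => Γ ∈ C), (∏ Γ' ∈ C, u Γ')
        ≤ ∑ C ∈ clSet compat P Γ, ∏ Γ' ∈ C, u Γ' := by
      intro Γ hΓ
      refine Finset.sum_le_sum_of_subset_of_nonneg ?_
        (fun C _ _ => Finset.prod_nonneg fun Γ' _ => hu0 Γ')
      intro C hC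
      rw [Finset.mem_filter, hfsdef, Finset.mem_filter, Finset.mem_powerset] at hC
      rw [mem_clSet]
      exact ⟨hC.1.1, hC.1.2.1, hC.2⟩
    have hcount : ∀ Γ ∈ Sx, ∑ C ∈ clSet compat P Γ, ∏ Γ' ∈ C, u Γ'
        ≤ u Γ * Real.exp Γ.len := by
      intro Γ hΓ
      have hΓP : Γ ∈ P := by
        rw [hSxdef, Finset.mem_filter] at hΓ
        exact hΓ.1
      exact count_bound hsym P u hu0 hsumc P (Finset.Subset.refl P) Γ hΓP
    have hSxsum : ∑ Γ ∈ Sx, u Γ * Real.exp Γ.len ≤ 1/6 := by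
      have hrw : ∑ Γ ∈ Sx, u Γ * Real.exp Γ.len
          = ∑ Γ ∈ Sx, Real.exp (-(c₁+2) * (Γ.len:ℝ)) :=
        Finset.sum_congr rfl fun Γ' _ => huexp Γ'
      rw [hrw]
      have := esum c₁ Sx 1 ?_ ?_
      · linarith
      · intro n
        rw [one_mul]
        refine le_trans ?_ (hsite x n)
        apply Nat.cast_le.mpr
        apply Finset.card_le_card
        intro y hy
        simp only [hSxdef, Finset.mem_filter] at hy ⊢
        exact ⟨hPK hy.1.1, hy.1.2, hy.2⟩
      · intro Γ' hΓ'
        rw [hSxdef, Finset.mem_filter] at hΓ'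
        exact hlen Γ' (hPK hΓ'.1)
    calc ∑ C ∈ fs, |phi β η compat C| * Real.exp ((2*β/(l₀:ℝ) - (2*c₁+8)) * tlen C)
        ≤ ∑ C ∈ fs, ∏ Γ ∈ C, u Γ := Finset.sum_le_sum hcluster
    _ ≤ ∑ C ∈ fs, ∑ Γ ∈ Sx.filter (fun Γ => Γ ∈ C), (∏ Γ' ∈ C, u Γ') :=
        Finset.sum_le_sum hstep1
    _ = ∑ Γ ∈ Sx, ∑ C ∈ fs.filter (fun C => Γ ∈ C), (∏ Γ' ∈ C, u Γ') := hswap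
    _ ≤ ∑ Γ ∈ Sx, ∑ C ∈ clSet compat P Γ, ∏ Γ' ∈ C, u Γ' :=
        Finset.sum_le_sum hstep3
    _ ≤ ∑ Γ ∈ Sx, u Γ * Real.exp Γ.len := Finset.sum_le_sum hcount
    _ ≤ 1/6 := hSxsum
    _ ≤ 1 := by norm_num
  · -- η-dependence
    intro C η' hηη'
    rw [phi, phi]
    refine Finset.sum_congr rfl fun A hA => ?_
    have hAC : A ⊆ C := Finset.mem_powerset.mp hA
    congr 2
    rw [polyZ, polyZ]
    refine Finset.sum_congr rfl fun Δ hΔ => ?_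
    have hΔA : Δ ⊆ A := Finset.mem_powerset.mp (Finset.mem_filter.mp hΔ).1
    refine Finset.prod_congr rfl fun Γ hΓ => ?_
    have hsum : ∑ y ∈ Γ.minusB, η y = ∑ y ∈ Γ.minusB, η' y :=
      Finset.sum_congr rfl fun y hy => hηη' y (Finset.mem_biUnion.mpr ⟨Γ, hAC (hΔA hΓ), hy⟩)
    rw [rho, rho, hsum]
end

section
/- Let S be a countable polymer set with symmetric reflexive incompatibility relation and ẑ : S → [0,∞). For a finite set A ⊆ S and X ∈ A define 𝔛_X(A) = Σ_{Δ ⊆ A cluster, X ∈ Δ} Π_{Y ∈ Δ} ẑ(Y). Then 𝔛_X(A) ≤ ẑ(X) · exp[ Σ_{Y ∈ A∖{X}, Y ≁ X} 𝔛_Y(A∖{X}) ]. -/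
open scoped Classical

/-- A nonempty finite set of polymers is a cluster if it admits no decomposition into
two nonempty disjoint elementwise compatible parts. -/
def IsCluster {S : Type*} (incomp : S → S → Prop) (Δ : Finset S) : Prop :=
  Δ.Nonempty ∧
    ¬ ∃ Δ₁ Δ₂ : Finset S, Δ₁.Nonempty ∧ Δ₂.Nonempty ∧ Disjoint Δ₁ Δ₂ ∧
      (∀ X, X ∈ Δ ↔ (X ∈ Δ₁ ∨ X ∈ Δ₂)) ∧
      ∀ X ∈ Δ₁, ∀ Y ∈ Δ₂, ¬ incomp X Y

/-- `𝔛_X(A)`: the sum over clusters `Δ ⊆ A` containing `X` of `Π_{Y ∈ Δ} ẑ(Y)`. -/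
noncomputable def clusterSum {S : Type*} (incomp : S → S → Prop) (zhat : S → ℝ)
    (A : Finset S) (X : S) : ℝ :=
  ∑ Δ ∈ A.powerset.filter (fun Δ => IsCluster incomp Δ ∧ X ∈ Δ), ∏ Y ∈ Δ, zhat Y

/-!
Removing `X` from a cluster `Δ ∋ X` leaves the disjoint union of the connected components of
`Δ ∖ {X}`; these are clusters of `A ∖ {X}`, and each contains a polymer incompatible with `X`
because `Δ` is connected. Tagging every component with one such polymer (its anchor) sends `Δ`
injectively to a family indexed by the `Y ∈ A ∖ {X}` with `Y ≁ X`, whose entry at `Y` is empty or a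
cluster of `A ∖ {X}` containing `Y`, and the weight of `Δ` is `ẑ(X)` times the product of the
weights of the entries. Hence `𝔛_X(A) ≤ ẑ(X) ∏_Y (1 + 𝔛_Y(A ∖ {X}))`, and `1 + t ≤ exp t`.
-/

lemma Finset.sum_prod_le_prod_sum_of_injOn {κ ι α : Type*} (s : Finset κ) (t : Finset ι)
    (u : ι → Finset α) (F : κ → ι → α) (hF : ∀ k ∈ s, ∀ i ∈ t, F k i ∈ u i)
    (hinj : ∀ k₁ ∈ s, ∀ k₂ ∈ s, (∀ i ∈ t, F k₁ i = F k₂ i) → k₁ = k₂)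
    (w : α → ℝ) (hw : ∀ a, 0 ≤ w a) :
    ∑ k ∈ s, ∏ i ∈ t, w (F k i) ≤ ∏ i ∈ t, ∑ a ∈ u i, w a := by
  set G : κ → ∀ i ∈ t, α := fun k i _ => F k i
  have hG : Set.InjOn G s := fun k₁ h₁ k₂ h₂ h =>
    hinj k₁ h₁ k₂ h₂ fun i hi => congrFun (congrFun h i) hi
  calc ∑ k ∈ s, ∏ i ∈ t, w (F k i)
      = ∑ p ∈ s.image G, ∏ i ∈ t.attach, w (p i.1 i.2) := by
        rw [Finset.sum_image hG]
        exact Finset.sum_congr rfl fun k _ => (Finset.prod_attach t fun i => w (F k i)).symm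
    _ ≤ ∑ p ∈ t.pi u, ∏ i ∈ t.attach, w (p i.1 i.2) :=
        Finset.sum_le_sum_of_subset_of_nonneg
          (Finset.image_subset_iff.2 fun k hk => Finset.mem_pi.2 (hF k hk))
          fun _ _ _ => Finset.prod_nonneg fun _ _ => hw _
    _ = ∏ i ∈ t, ∑ a ∈ u i, w a := (Finset.prod_sum t u fun _ a => w a).symm

section Clusters

variable {S : Type*} {r : S → S → Prop} {z : S → ℝ}

noncomputable def clusterComponent (r : S → S → Prop) (Γ : Finset S) (a : S) : Finset S :=
  Γ.filter (Relation.ReflTransGen (fun x y => x ∈ Γ ∧ y ∈ Γ ∧ r x y) a)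

lemma clusterComponent_subset (Γ : Finset S) (a : S) : clusterComponent r Γ a ⊆ Γ :=
  Finset.filter_subset _ _

lemma mem_clusterComponent_self {Γ : Finset S} {a : S} (ha : a ∈ Γ) :
    a ∈ clusterComponent r Γ a :=
  Finset.mem_filter.2 ⟨ha, .refl⟩

lemma mem_clusterComponent_of_rel {Γ : Finset S} {a u v : S} (hu : u ∈ clusterComponent r Γ a)
    (hv : v ∈ Γ) (huv : r u v) : v ∈ clusterComponent r Γ a :=
  have hu' := Finset.mem_filter.1 hu
  Finset.mem_filter.2 ⟨hv, hu'.2.tail ⟨hu'.1, hv, huv⟩⟩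

lemma clusterComponent_subset_of_closed {Γ P : Finset S} {a : S} (ha : a ∈ P)
    (hP : ∀ u ∈ P, ∀ v ∈ Γ, r u v → v ∈ P) : clusterComponent r Γ a ⊆ P := by
  intro b hb
  induction (Finset.mem_filter.1 hb).2 with
  | refl => exact ha
  | tail hab hstep ih =>
    exact hP _ (ih (Finset.mem_filter.2 ⟨hstep.1, hab⟩)) _ hstep.2.1 hstep.2.2

lemma clusterComponent_eq_of_mem (hsym : ∀ x y, r x y → r y x) {Γ : Finset S} {a b : S}
    (hb : b ∈ clusterComponent r Γ a) : clusterComponent r Γ b = clusterComponent r Γ a := by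
  have hab := (Finset.mem_filter.1 hb).2
  have hba : Relation.ReflTransGen (fun x y => x ∈ Γ ∧ y ∈ Γ ∧ r x y) b a :=
    Relation.ReflTransGen.mono (fun _ _ h => ⟨h.2.1, h.1, hsym _ _ h.2.2⟩) _ _
      (Relation.reflTransGen_swap.2 hab)
  ext z
  simp only [clusterComponent, Finset.mem_filter]
  exact and_congr_right fun _ => ⟨hab.trans, hba.trans⟩

lemma IsCluster.eq_of_closed {Δ P : Finset S} (hΔ : IsCluster r Δ) (hPΔ : P ⊆ Δ)
    (hP : P.Nonempty) (hclosed : ∀ u ∈ P, ∀ v ∈ Δ, r u v → v ∈ P) : P = Δ := by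
  by_contra hne
  refine hΔ.2 ⟨P, Δ \ P, hP, ?_, Finset.disjoint_sdiff, fun z => ?_, ?_⟩
  · exact Finset.sdiff_nonempty.2 fun h => hne (hPΔ.antisymm h)
  · by_cases hz : z ∈ P
    · simp [hz, hPΔ hz]
    · simp [hz]
  · intro u hu v hv huv
    exact (Finset.mem_sdiff.1 hv).2 (hclosed u hu v (Finset.mem_sdiff.1 hv).1 huv)

lemma isCluster_clusterComponent (hsym : ∀ x y, r x y → r y x) {Γ : Finset S} {a : S}
    (ha : a ∈ Γ) : IsCluster r (clusterComponent r Γ a) := by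
  set C := clusterComponent r Γ a
  have key : ∀ P Q : Finset S, a ∈ P → Q.Nonempty → Disjoint P Q →
      (∀ z, z ∈ C ↔ z ∈ P ∨ z ∈ Q) → (∀ u ∈ P, ∀ v ∈ Q, ¬ r u v) → False := by
    intro P Q haP ⟨q, hq⟩ hPQ hC hnot
    have hclosed : ∀ u ∈ P, ∀ v ∈ Γ, r u v → v ∈ P := fun u hu v hv huv =>
      (((hC v).1 (mem_clusterComponent_of_rel ((hC u).2 (.inl hu)) hv huv)).resolve_right
        fun hvQ => hnot u hu v hvQ huv)
    exact Finset.disjoint_left.1 hPQ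
      (clusterComponent_subset_of_closed haP hclosed ((hC q).2 (.inr hq))) hq
  refine ⟨⟨a, mem_clusterComponent_self ha⟩, ?_⟩
  rintro ⟨Δ₁, Δ₂, h₁, h₂, hdisj, hC, hnot⟩
  rcases (hC a).1 (mem_clusterComponent_self ha) with haΔ | haΔ
  · exact key Δ₁ Δ₂ haΔ h₂ hdisj hC hnot
  · exact key Δ₂ Δ₁ haΔ h₁ hdisj.symm (fun z => (hC z).trans or_comm)
      fun u hu v hv huv => hnot v hv u hu (hsym _ _ huv)

lemma IsCluster.exists_rel_mem_clusterComponent_erase {Δ : Finset S} (hΔ : IsCluster r Δ)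
    {X y : S} (hX : X ∈ Δ) (hy : y ∈ Δ.erase X) :
    ∃ z ∈ clusterComponent r (Δ.erase X) y, r z X := by
  by_contra! hnone
  have hsub : clusterComponent r (Δ.erase X) y ⊆ Δ :=
    (clusterComponent_subset _ _).trans (Finset.erase_subset _ _)
  have hclosed : ∀ u ∈ clusterComponent r (Δ.erase X) y, ∀ v ∈ Δ, r u v →
      v ∈ clusterComponent r (Δ.erase X) y := by
    intro u hu v hv huv
    have hvX : v ≠ X := by rintro rfl; exact hnone u hu huv
    exact mem_clusterComponent_of_rel hu (Finset.mem_erase.2 ⟨hvX, hv⟩) huv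
  have hXC := (hΔ.eq_of_closed hsub ⟨y, mem_clusterComponent_self hy⟩ hclosed).symm ▸ hX
  exact Finset.notMem_erase X Δ (clusterComponent_subset _ _ hXC)

noncomputable def anchor (r : S → S → Prop) (X : S) (C : Finset S) : S :=
  haveI : Nonempty S := ⟨X⟩
  Classical.epsilon fun Y => Y ∈ C ∧ r Y X

lemma anchor_spec {X : S} {C : Finset S} (h : ∃ Y ∈ C, r Y X) :
    anchor r X C ∈ C ∧ r (anchor r X C) X :=
  haveI : Nonempty S := ⟨X⟩
  Classical.epsilon_spec (p := fun Y => Y ∈ C ∧ r Y X) (by simpa using h)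

noncomputable def anchoredComponent (r : S → S → Prop) (X : S) (Γ : Finset S) (Y : S) :
    Finset S :=
  if Y ∈ Γ ∧ anchor r X (clusterComponent r Γ Y) = Y then clusterComponent r Γ Y else ∅

lemma pairwiseDisjoint_anchoredComponent (hsym : ∀ x y, r x y → r y x) (X : S)
    (Γ : Finset S) (s : Set S) : s.PairwiseDisjoint (anchoredComponent r X Γ) := by
  intro Y _ Y' _ hne
  simp only [Function.onFun, anchoredComponent]
  split_ifs with h h'
  · refine Finset.disjoint_left.2 fun u hu hu' => hne ?_
    rw [← h.2, ← h'.2, ← clusterComponent_eq_of_mem hsym hu,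
      ← clusterComponent_eq_of_mem hsym hu']
  all_goals simp

lemma biUnion_anchoredComponent (hsym : ∀ x y, r x y → r y x) {X : S} {Γ B : Finset S}
    (hΓB : Γ ⊆ B) (hmeet : ∀ y ∈ Γ, ∃ z ∈ clusterComponent r Γ y, r z X) :
    (B.filter (r · X)).biUnion (anchoredComponent r X Γ) = Γ := by
  refine Finset.Subset.antisymm (fun z hz => ?_) (fun z hz => ?_)
  · obtain ⟨Y, -, hzY⟩ := Finset.mem_biUnion.1 hz
    unfold anchoredComponent at hzY
    split_ifs at hzY
    · exact clusterComponent_subset _ _ hzY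
    · simp at hzY
  · obtain ⟨hY, hYX⟩ := anchor_spec (hmeet z hz)
    set Y := anchor r X (clusterComponent r Γ z)
    have hcomp : clusterComponent r Γ Y = clusterComponent r Γ z :=
      clusterComponent_eq_of_mem hsym hY
    have hYΓ : Y ∈ Γ := clusterComponent_subset _ _ hY
    refine Finset.mem_biUnion.2 ⟨Y, Finset.mem_filter.2 ⟨hΓB hYΓ, hYX⟩, ?_⟩
    rw [anchoredComponent, if_pos ⟨hYΓ, by rw [hcomp]⟩, hcomp]
    exact mem_clusterComponent_self hz

lemma anchoredComponent_mem (hsym : ∀ x y, r x y → r y x) {X Y : S} {Γ B : Finset S}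
    (hΓB : Γ ⊆ B) :
    anchoredComponent r X Γ Y ∈
      insert ∅ (B.powerset.filter fun C => IsCluster r C ∧ Y ∈ C) := by
  unfold anchoredComponent
  split_ifs with h
  · refine Finset.mem_insert_of_mem (Finset.mem_filter.2 ⟨?_, ?_, ?_⟩)
    · exact Finset.mem_powerset.2 ((clusterComponent_subset _ _).trans hΓB)
    · exact isCluster_clusterComponent hsym h.1
    · exact mem_clusterComponent_self h.1
  · exact Finset.mem_insert_self _ _

lemma clusterSum_nonneg (hz : ∀ X, 0 ≤ z X) (A : Finset S) (X : S) :
    0 ≤ clusterSum r z A X :=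
  Finset.sum_nonneg fun _ _ => Finset.prod_nonneg fun _ _ => hz _

lemma sum_insert_empty_eq_one_add_clusterSum (B : Finset S) (Y : S) :
    ∑ C ∈ insert ∅ (B.powerset.filter fun C => IsCluster r C ∧ Y ∈ C), ∏ Z ∈ C, z Z =
      1 + clusterSum r z B Y := by
  rw [Finset.sum_insert (by simp), Finset.prod_empty, clusterSum]

lemma IsCluster.erase_eq_biUnion_anchoredComponent (hsym : ∀ x y, r x y → r y x)
    {Δ B : Finset S} (hΔ : IsCluster r Δ) {X : S} (hX : X ∈ Δ) (hΔB : Δ.erase X ⊆ B) :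
    Δ.erase X = (B.filter (r · X)).biUnion (anchoredComponent r X (Δ.erase X)) :=
  (biUnion_anchoredComponent hsym hΔB fun _ hy =>
    hΔ.exists_rel_mem_clusterComponent_erase hX hy).symm

lemma clusterSum_le_mul_prod_one_add (hsym : ∀ x y, r x y → r y x) (hz : ∀ X, 0 ≤ z X)
    (A : Finset S) (X : S) :
    clusterSum r z A X ≤
      z X * ∏ Y ∈ (A.erase X).filter (r · X), (1 + clusterSum r z (A.erase X) Y) := by
  set B := A.erase X
  set T := B.filter (r · X)
  set D := A.powerset.filter fun Δ => IsCluster r Δ ∧ X ∈ Δ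
  have hD : ∀ Δ ∈ D, IsCluster r Δ ∧ X ∈ Δ ∧ Δ.erase X ⊆ B := fun Δ hΔ => by
    obtain ⟨hΔA, hcl, hX⟩ := Finset.mem_filter.1 hΔ
    exact ⟨hcl, hX, Finset.erase_subset_erase X (Finset.mem_powerset.1 hΔA)⟩
  have hsplit : ∀ Δ ∈ D, Δ.erase X = T.biUnion (anchoredComponent r X (Δ.erase X)) :=
    fun Δ hΔ => (hD Δ hΔ).1.erase_eq_biUnion_anchoredComponent hsym (hD Δ hΔ).2.1
      (hD Δ hΔ).2.2
  have hfactor : ∀ Δ ∈ D, ∏ Y ∈ Δ, z Y =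
      z X * ∏ Y ∈ T, ∏ Z ∈ anchoredComponent r X (Δ.erase X) Y, z Z := fun Δ hΔ => by
    rw [← Finset.mul_prod_erase Δ z (hD Δ hΔ).2.1, hsplit Δ hΔ,
      Finset.prod_biUnion (pairwiseDisjoint_anchoredComponent hsym _ _ _), ← hsplit Δ hΔ]
  have hinj : ∀ Δ₁ ∈ D, ∀ Δ₂ ∈ D, (∀ Y ∈ T, anchoredComponent r X (Δ₁.erase X) Y =
      anchoredComponent r X (Δ₂.erase X) Y) → Δ₁ = Δ₂ := fun Δ₁ h₁ Δ₂ h₂ h => by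
    rw [← Finset.insert_erase (hD Δ₁ h₁).2.1, ← Finset.insert_erase (hD Δ₂ h₂).2.1,
      hsplit Δ₁ h₁, hsplit Δ₂ h₂, Finset.biUnion_congr rfl h]
  calc clusterSum r z A X
      = z X * ∑ Δ ∈ D, ∏ Y ∈ T, ∏ Z ∈ anchoredComponent r X (Δ.erase X) Y, z Z := by
        rw [clusterSum, Finset.mul_sum]
        exact Finset.sum_congr rfl hfactor
    _ ≤ z X * ∏ Y ∈ T, ∑ C ∈ insert ∅ (B.powerset.filter fun C => IsCluster r C ∧ Y ∈ C),
          ∏ Z ∈ C, z Z :=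
        mul_le_mul_of_nonneg_left (Finset.sum_prod_le_prod_sum_of_injOn D T _
          (fun Δ Y => anchoredComponent r X (Δ.erase X) Y)
          (fun Δ hΔ Y _ => anchoredComponent_mem hsym (hD Δ hΔ).2.2) hinj
          (fun C => ∏ Z ∈ C, z Z) fun _ => Finset.prod_nonneg fun _ _ => hz _) (hz X)
    _ = z X * ∏ Y ∈ T, (1 + clusterSum r z B Y) := by
        simp only [sum_insert_empty_eq_one_add_clusterSum]

end Clusters

theorem statement14_general {S : Type*} (incomp : S → S → Prop)
    (hsym : ∀ X Y, incomp X Y → incomp Y X)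
    (zhat : S → ℝ) (hz : ∀ X, 0 ≤ zhat X) (A : Finset S) (X : S) :
    clusterSum incomp zhat A X ≤
      zhat X * Real.exp (∑ Y ∈ (A.erase X).filter (fun Y => incomp Y X),
        clusterSum incomp zhat (A.erase X) Y) :=
  (clusterSum_le_mul_prod_one_add hsym hz A X).trans <|
    mul_le_mul_of_nonneg_left (Real.prod_one_add_le_exp_sum _ (clusterSum_nonneg hz _)) (hz X)

/-- the recurrence inequality
`𝔛_X(A) ≤ ẑ(X)·exp[Σ_{Y ∈ A∖{X}, Y ≁ X} 𝔛_Y(A∖{X})]`. -/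
theorem statement14 {S : Type*} (incomp : S → S → Prop)
    (hsym : ∀ X Y, incomp X Y → incomp Y X) (hrefl : ∀ X, incomp X X)
    (zhat : S → ℝ) (hz : ∀ X, 0 ≤ zhat X) (A : Finset S) (X : S) (hX : X ∈ A) :
    clusterSum incomp zhat A X ≤
      zhat X * Real.exp (∑ Y ∈ (A.erase X).filter (fun Y => incomp Y X),
        clusterSum incomp zhat (A.erase X) Y) :=
  statement14_general incomp hsym zhat hz A X
end
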